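/- arXiv:math/0111189 — 13 statements merged into one kernel-verified Lean document; each statement's English description precedes it below -/
import Mathlib

section
/- Let B be a C*-algebra, let f ∈ B be a projection, and set J = {b * f : b ∈ B}. Let u ∈ B satisfy u* * u = f. Then: (1) the three sets {x * u* : x ∈ J}, {b * u* : b ∈ B}, and {b * (u * u*) : b ∈ B} coincide; call this set J₁; (2) u * u* is a projection which is a right identity for J₁ (y * (u * u*) = y for all y ∈ J₁), and J₁ is a norm-closed left ideal of B; (3) the map x ↦ x * u* is a linear bijection from J onto J₁, with inverse y ↦ y * u, which is completely isometric. -/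
open Filter Topology

/-- The canonical C*-norm of an `n × n` matrix over a (possibly non-unital) C*-algebra `A`:
the operator norm of left multiplication on the Hilbert `A`-module of columns `Aⁿ`.
(This is the unique C*-norm on `Mₙ(A)`.) -/
noncomputable def cnorm {A : Type*} [NonUnitalCStarAlgebra A] {n : ℕ}
    (x : Matrix (Fin n) (Fin n) A) : ℝ :=
  sSup {r : ℝ | ∃ v : Fin n → A, ‖∑ i, star (v i) * v i‖ ≤ 1 ∧
    r = Real.sqrt ‖∑ i, star (x.mulVec v i) * (x.mulVec v i)‖}

/-- A map `T` defined on a subspace `V` of a C*-algebra `A`, with values in a C*-algebra `B`,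
is completely isometric if for every `n`, applying `T` entrywise to `n × n` matrices with
entries in `V` preserves the canonical C*-norm of matrices. -/
def IsCompletelyIsometric {A B : Type*} [NonUnitalCStarAlgebra A] [NonUnitalCStarAlgebra B]
    {V : Submodule ℂ A} (T : V → B) : Prop :=
  ∀ (n : ℕ) (x : Matrix (Fin n) (Fin n) V),
    cnorm (x.map T) = cnorm (x.map ((↑) : V → A))
/-- The left ideal `{a * e : a ∈ A}` of a C*-algebra `A`, as a `ℂ`-submodule. -/
def principalLeftIdeal (A : Type*) [NonUnitalCStarAlgebra A] (e : A) : Submodule ℂ A where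
  carrier := {x | ∃ a : A, x = a * e}
  add_mem' := by rintro x y ⟨a, rfl⟩ ⟨b, rfl⟩; exact ⟨a + b, (add_mul a b e).symm⟩
  zero_mem' := ⟨0, (zero_mul e).symm⟩
  smul_mem' := by rintro c x ⟨a, rfl⟩; exact ⟨c • a, (smul_mul_assoc c a e).symm⟩

lemma proj_conj_sub {B : Type*} [NonUnitalCStarAlgebra B] {e : B}
    (he1 : star e = e) (he2 : e * e = e) (w : B) :
    star w * w - star (e * w) * (e * w) = star (w - e * w) * (w - e * w) := by
  have h : star (e * w) * (e * w) = star w * (e * w) := by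
    rw [star_mul, he1, mul_assoc, ← mul_assoc e, he2]
  rw [star_sub, sub_mul, mul_sub, mul_sub, h, star_mul, he1, mul_assoc]
  abel

lemma norm_sum_proj_conj_le {B : Type*} [NonUnitalCStarAlgebra B] {e : B}
    (he1 : star e = e) (he2 : e * e = e) {n : ℕ} (v : Fin n → B) :
    ‖∑ i, star (e * v i) * (e * v i)‖ ≤ ‖∑ i, star (v i) * v i‖ := by
  letI := CStarAlgebra.spectralOrder (Unitization ℂ B)
  haveI := CStarAlgebra.spectralOrderedRing (Unitization ℂ B)
  rw [← Unitization.norm_inr (𝕜 := ℂ) (∑ i, star (e * v i) * (e * v i)),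
    ← Unitization.norm_inr (𝕜 := ℂ) (∑ i, star (v i) * v i)]
  have hmap : ∀ (w : Fin n → B),
      ((∑ i, star (w i) * w i : B) : Unitization ℂ B)
        = ∑ i, star ((w i : Unitization ℂ B)) * (w i : Unitization ℂ B) := by
    intro w
    rw [show ((∑ i, star (w i) * w i : B) : Unitization ℂ B)
        = Unitization.inrNonUnitalStarAlgHom ℂ B (∑ i, star (w i) * w i) from rfl, map_sum]
    simp [Unitization.inr_mul, Unitization.inr_star]
  apply CStarAlgebra.norm_le_norm_of_nonneg_of_le
  · rw [hmap (fun i => e * v i)]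
    exact Finset.sum_nonneg fun i _ => star_mul_self_nonneg _
  · rw [← sub_nonneg, hmap (fun i => e * v i), hmap v, ← Finset.sum_sub_distrib]
    have hterm : ∀ i : Fin n,
        star ((v i : Unitization ℂ B)) * (v i : Unitization ℂ B)
          - star ((e * v i : B) : Unitization ℂ B) * ((e * v i : B) : Unitization ℂ B)
        = star (((v i - e * v i : B) : Unitization ℂ B))
            * ((v i - e * v i : B) : Unitization ℂ B) := by
      intro i
      have := congrArg (fun b : B => (b : Unitization ℂ B)) (proj_conj_sub he1 he2 (v i))
      simpa [Unitization.inr_mul, Unitization.inr_star, Unitization.inr_sub] using this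
    rw [Finset.sum_congr rfl fun i _ => hterm i]
    exact Finset.sum_nonneg fun i _ => star_mul_self_nonneg _

theorem converse_banach_stone_translation
    {B : Type*} [NonUnitalCStarAlgebra B]
    (f : B) (hf₁ : star f = f) (hf₂ : f * f = f)
    (u : B) (hu : star u * u = f) :
    -- (1) the three sets coincide (all are `J₁ := {b * (u * u*) : b ∈ B}`)
    {y : B | ∃ x ∈ principalLeftIdeal B f, y = x * star u}
      = (principalLeftIdeal B (u * star u) : Set B) ∧
    {y : B | ∃ b : B, y = b * star u} = (principalLeftIdeal B (u * star u) : Set B) ∧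
    -- (2) `u * u*` is a projection, a right identity for `J₁`, and `J₁` is a
    -- norm-closed left ideal of `B`
    star (u * star u) = u * star u ∧ (u * star u) * (u * star u) = u * star u ∧
    (∀ y ∈ principalLeftIdeal B (u * star u), y * (u * star u) = y) ∧
    IsClosed (principalLeftIdeal B (u * star u) : Set B) ∧
    (∀ b : B, ∀ y ∈ principalLeftIdeal B (u * star u),
      b * y ∈ principalLeftIdeal B (u * star u)) ∧
    -- (3) `x ↦ x * u*` is a linear bijection from `J` onto `J₁` with inverse `y ↦ y * u`,
    -- and it is completely isometric
    (∀ x : principalLeftIdeal B f, (x : B) * star u ∈ principalLeftIdeal B (u * star u)) ∧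
    (∀ x : principalLeftIdeal B f, ((x : B) * star u) * u = (x : B)) ∧
    (∀ y ∈ principalLeftIdeal B (u * star u), y * u ∈ principalLeftIdeal B f) ∧
    (∀ y ∈ principalLeftIdeal B (u * star u), (y * u) * star u = y) ∧
    IsCompletelyIsometric (fun x : principalLeftIdeal B f => (x : B) * star u) := by
  -- basic algebraic identities
  have huf : u * f = u := by
    have h0 : star (u * f - u) * (u * f - u) = 0 := by
      rw [star_sub, star_mul, hf₁, sub_mul, mul_sub, mul_sub, mul_assoc, ← mul_assoc (star u),
        hu, mul_assoc f (star u) u, hu]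
      simp only [hf₂]
      abel
    exact sub_eq_zero.mp <| CStarRing.star_mul_self_eq_zero_iff (u * f - u) |>.mp h0
  have hfu : f * star u = star u := by
    have := congrArg star huf
    rwa [star_mul, hf₁] at this
  set e := u * star u with he_def
  have he1 : star e = e := by simp [he_def, star_mul]
  have heu : e * u = u := by rw [he_def, mul_assoc, hu, huf]
  have hue : star u * e = star u := by rw [he_def, ← mul_assoc, hu, hfu]
  have he2 : e * e = e := by rw [he_def, ← mul_assoc, mul_assoc u (star u) u, hu, huf]
  -- set equalities
  have hJ1 : {y : B | ∃ x ∈ principalLeftIdeal B f, y = x * star u}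
      = (principalLeftIdeal B e : Set B) := by
    ext y
    constructor
    · rintro ⟨x, ⟨a, rfl⟩, rfl⟩
      exact ⟨a * f * star u, by rw [mul_assoc (a * f), hue]⟩
    · rintro ⟨b, rfl⟩
      exact ⟨b * u, ⟨b * u, by rw [mul_assoc, huf]⟩, by rw [he_def, mul_assoc]⟩
  have hJ2 : {y : B | ∃ b : B, y = b * star u} = (principalLeftIdeal B e : Set B) := by
    ext y
    constructor
    · rintro ⟨b, rfl⟩
      exact ⟨b * star u, by rw [mul_assoc, hue]⟩
    · rintro ⟨b, rfl⟩
      exact ⟨b * u, by rw [he_def, mul_assoc]⟩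
  have hrid : ∀ y ∈ principalLeftIdeal B e, y * e = y := by
    rintro y ⟨b, rfl⟩
    rw [mul_assoc, he2]
  have hclosed : IsClosed (principalLeftIdeal B e : Set B) := by
    have : (principalLeftIdeal B e : Set B) = {y : B | y * e = y} := by
      ext y
      exact ⟨fun hy => hrid y hy, fun hy => ⟨y, hy.symm⟩⟩
    rw [this]
    exact isClosed_eq (continuous_id.mul continuous_const) continuous_id
  have hideal : ∀ b : B, ∀ y ∈ principalLeftIdeal B e, b * y ∈ principalLeftIdeal B e := by
    rintro b y ⟨c, rfl⟩
    exact ⟨b * c, (mul_assoc b c e).symm⟩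
  have hxf : ∀ x : principalLeftIdeal B f, (x : B) * f = (x : B) := by
    rintro ⟨x, a, rfl⟩
    simp only [mul_assoc, hf₂]
  have hfwd : ∀ x : principalLeftIdeal B f, (x : B) * star u ∈ principalLeftIdeal B e :=
    fun x => ⟨(x : B) * star u, by rw [mul_assoc, hue]⟩
  have hinv1 : ∀ x : principalLeftIdeal B f, ((x : B) * star u) * u = (x : B) := by
    intro x
    rw [mul_assoc, hu, hxf]
  have hback : ∀ y ∈ principalLeftIdeal B e, y * u ∈ principalLeftIdeal B f := by
    rintro y ⟨b, rfl⟩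
    exact ⟨b * e * u, by rw [mul_assoc (b * e), huf]⟩
  have hinv2 : ∀ y ∈ principalLeftIdeal B e, (y * u) * star u = y := by
    rintro y ⟨b, rfl⟩
    rw [mul_assoc b e u, heu, mul_assoc, ← he_def]
  refine ⟨hJ1, hJ2, he1, he2, hrid, hclosed, hideal, hfwd, hinv1, hback, hinv2, ?_⟩
  -- complete isometry
  intro n x
  unfold cnorm
  congr 1
  set M := x.map ((↑) : principalLeftIdeal B f → B) with hM
  have hMf : ∀ i j, M i j * f = M i j := fun i j => hxf (x i j)
  have hmv1 : ∀ v : Fin n → B,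
      (x.map (fun x : principalLeftIdeal B f => (x : B) * star u)).mulVec v
        = M.mulVec (fun j => star u * v j) := by
    intro v
    funext i
    simp only [Matrix.mulVec, Matrix.map_apply, dotProduct, hM, mul_assoc]
  have hmv2 : ∀ w : Fin n → B, M.mulVec (fun j => f * w j) = M.mulVec w := by
    intro w
    funext i
    simp only [Matrix.mulVec, dotProduct]
    exact Finset.sum_congr rfl fun j _ => by rw [← mul_assoc, hMf]
  ext r
  constructor
  · rintro ⟨v, hv, rfl⟩
    refine ⟨fun j => star u * v j, ?_, by rw [hmv1]⟩
    calc ‖∑ i, star (star u * v i) * (star u * v i)‖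
        = ‖∑ i, star (e * v i) * (e * v i)‖ := by
          congr 1
          refine Finset.sum_congr rfl fun i _ => ?_
          rw [star_mul, star_mul, star_star, he1, mul_assoc, mul_assoc, ← mul_assoc u,
            ← he_def, ← mul_assoc e, he2]
      _ ≤ ‖∑ i, star (v i) * v i‖ := norm_sum_proj_conj_le he1 he2 v
      _ ≤ 1 := hv
  · rintro ⟨w, hw, rfl⟩
    refine ⟨fun j => u * w j, ?_, ?_⟩
    · calc ‖∑ i, star (u * w i) * (u * w i)‖
          = ‖∑ i, star (f * w i) * (f * w i)‖ := by
            congr 1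
            refine Finset.sum_congr rfl fun i _ => ?_
            rw [star_mul, star_mul, hf₁, mul_assoc, mul_assoc, ← mul_assoc (star u), hu,
              ← mul_assoc f, hf₂]
        _ ≤ ‖∑ i, star (w i) * w i‖ := norm_sum_proj_conj_le hf₁ hf₂ w
        _ ≤ 1 := hw
    · rw [hmv1, show (fun j => star u * (u * w j)) = fun j => f * w j from
        funext fun j => by rw [← mul_assoc, hu], hmv2]
end

section
/- Let A be a C*-algebra and x ∈ A, and suppose the left ideal J = {a * x : a ∈ A} is norm-closed in A. Then there exists a projection e (e = e* and e * e = e) with e ∈ J, such that J = {a * e : a ∈ A} and y * e = y for every y ∈ J (e is a right identity for J). -/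
open Filter Topology

open scoped CStarAlgebra in
/-- Key step: the quasispectrum of `star x * x` has a gap above 0. -/
lemma aux_gap {A : Type*} [NonUnitalCStarAlgebra A] (x : A)
    (hc : IsClosed {y : A | ∃ a : A, y = a * x}) :
    ∃ δ > (0:ℝ), ∀ t ∈ quasispectrum ℝ (star x * x), t = 0 ∨ δ ≤ t := by
  set b : A := star x * x with hb
  have hsa : IsSelfAdjoint b := IsSelfAdjoint.star_mul_self x
  have hSnn : ∀ t ∈ quasispectrum ℝ b, 0 ≤ t := by
    rw [hb, Unitization.quasispectrum_eq_spectrum_inr' ℝ ℂ]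
    intro t ht
    have h' : ((star x * x : A) : A⁺¹) = star (x : A⁺¹) * (x : A⁺¹) := by simp
    rw [h'] at ht
    exact spectrum_star_mul_self_nonneg t ht
  -- open mapping theorem
  obtain ⟨C, hC, hmap⟩ :
      ∃ C > 0, ∀ y : A, (∃ a : A, y = a * x) → ∃ a : A, a * x = y ∧ ‖a‖ ≤ C * ‖y‖ := by
    set J : Set A := {y : A | ∃ a : A, y = a * x} with hJ
    let S : Submodule ℂ A :=
      { carrier := J
        add_mem' := fun hu hv => by
          obtain ⟨a, ha⟩ := hu; obtain ⟨c, hc'⟩ := hv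
          exact ⟨a + c, by simp [ha, hc', add_mul]⟩
        zero_mem' := ⟨0, by simp⟩
        smul_mem' := fun c u hu => by
          obtain ⟨a, ha⟩ := hu
          exact ⟨c • a, by simp [ha, smul_mul_assoc]⟩ }
    have hScl : IsClosed (S : Set A) := hc
    have : CompleteSpace S := hScl.completeSpace_coe
    let T : A →L[ℂ] S := ((ContinuousLinearMap.mul ℂ A).flip x).codRestrict S
      (fun a => ⟨a, by simp⟩)
    have hTsurj : Function.Surjective T := by
      rintro ⟨y, a, rfl⟩
      exact ⟨a, by ext; simp [T]⟩
    obtain ⟨C, hC, h⟩ := T.exists_preimage_norm_le hTsurj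
    refine ⟨C, hC, fun y hy => ?_⟩
    obtain ⟨a, ha, hna⟩ := h ⟨y, hy⟩
    exact ⟨a, by simpa [T, Subtype.ext_iff] using ha, by simpa using hna⟩
  refine ⟨(1 / (3 * C + 1)) ^ 2, by positivity, fun t ht => ?_⟩
  by_contra hcon
  push_neg at hcon
  obtain ⟨ht0, htδ⟩ := hcon
  have htpos : 0 < t := lt_of_le_of_ne (hSnn t ht) (Ne.symm ht0)
  -- bump function
  set h : ℝ → ℝ := fun s => max 0 (1 / t - |s - t| * (2 / t ^ 2)) with hh
  have hhcont : Continuous h := by fun_prop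
  have hh0 : h 0 = 0 := by
    rw [hh]
    simp only [zero_sub, abs_neg, abs_of_pos htpos]
    rw [max_eq_left]
    have : t * (2 / t ^ 2) = 2 / t := by field_simp
    rw [this]
    have h1 : (1:ℝ)/t ≤ 2/t := by gcongr <;> norm_num
    linarith
  have hht : h t = 1 / t := by simp [hh, one_div, le_of_lt (by positivity : (0:ℝ) < t⁻¹)]
  set f : ℝ → ℝ := fun s => h s * s with hf
  have hfcont : Continuous f := by fun_prop
  have hf0 : f 0 = 0 := by simp [hf]
  have hft : f t = 1 := by rw [hf]; simp only [hht]; field_simp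
  -- bounds on f for s ≥ 0
  have hfbound : ∀ s : ℝ, 0 ≤ s → 0 ≤ f s ∧ f s ≤ 3 / 2 ∧ s * (f s * f s) ≤ 4 * t := by
    intro s hs
    have hh_nonneg : 0 ≤ h s := le_max_left _ _
    have hh_le : h s ≤ 1 / t := by
      apply max_le (by positivity)
      have : 0 ≤ |s - t| * (2 / t ^ 2) := by positivity
      linarith
    by_cases hcase : |s - t| < t / 2
    · have hs32 : s ≤ 3 * t / 2 := by
        have := abs_lt.mp hcase
        linarith [this.2]
      have hfs : f s ≤ 3 / 2 := by
        rw [hf]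
        calc h s * s ≤ (1 / t) * (3 * t / 2) := by
              apply mul_le_mul hh_le hs32 hs (by positivity)
          _ = 3 / 2 := by field_simp
      refine ⟨by rw [hf]; positivity, hfs, ?_⟩
      have h0f : 0 ≤ f s := by rw [hf]; positivity
      nlinarith [mul_le_mul hfs hfs h0f (by norm_num : (0:ℝ) ≤ 3/2)]
    · have : h s = 0 := by
        apply max_eq_left
        push_neg at hcase
        have h5 : (t / 2) * (2 / t ^ 2) ≤ |s - t| * (2 / t ^ 2) := by gcongr
        have ht2 : (t / 2) * (2 / t ^ 2) = 1 / t := by field_simp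
        linarith [ht2 ▸ h5]
      simp only [hf, this, zero_mul, mul_zero]
      exact ⟨le_refl 0, by norm_num, by positivity⟩
  -- y = cfcₙ f b lies in the ideal
  set y : A := cfcₙ f b with hy
  have hid : cfcₙ (fun s : ℝ => s) b = b := cfcₙ_id' ℝ b
  have hy_eq : y = cfcₙ h b * b := by
    rw [hy, hf]
    calc cfcₙ (fun s => h s * s) b = cfcₙ h b * cfcₙ (fun s : ℝ => s) b :=
          cfcₙ_mul h _ b hhcont.continuousOn hh0 continuous_id'.continuousOn rfl
      _ = cfcₙ h b * b := by rw [hid]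
  have hy_mem : ∃ a : A, y = a * x := ⟨cfcₙ h b * star x, by rw [hy_eq, hb, mul_assoc]⟩
  have hy_sa : IsSelfAdjoint y := cfcₙ_predicate f b
  have hy_norm : ‖y‖ ≤ 3 / 2 := by
    apply norm_cfcₙ_le
    intro s hs
    obtain ⟨h1, h2, _⟩ := hfbound s (hSnn s hs)
    rw [Real.norm_eq_abs, abs_of_nonneg h1]; exact h2
  obtain ⟨a, hax, hna⟩ := hmap y hy_mem
  have hna' : ‖a‖ ≤ C * (3 / 2) := hna.trans (by nlinarith)
  -- 1 ≤ ‖y * y‖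
  have hyy : y * y = cfcₙ (fun s => f s * f s) b := by
    rw [hy, cfcₙ_mul f f b hfcont.continuousOn hf0 hfcont.continuousOn hf0]
  have one_le : (1:ℝ) ≤ ‖y * y‖ := by
    rw [hyy]
    have := norm_apply_le_norm_cfcₙ (fun s => f s * f s) b ht
      ((hfcont.mul hfcont).continuousOn) (by simp [hf0]) hsa
    simpa [hft] using this
  -- ‖x * y‖ is small
  have hxynorm : ‖x * y‖ ≤ 2 * Real.sqrt t := by
    have hstar : star (x * y) * (x * y) = y * b * y := by
      rw [star_mul, hy_sa.star_eq, hb]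
      noncomm_ring
    have hybyn : ‖y * b * y‖ ≤ 4 * t := by
      have e2 : cfcₙ (fun s => f s * s) b = cfcₙ f b * cfcₙ (fun s : ℝ => s) b :=
        cfcₙ_mul f _ b hfcont.continuousOn hf0 continuous_id'.continuousOn rfl
      have e1 : cfcₙ (fun s => (f s * s) * f s) b = cfcₙ (fun s => f s * s) b * cfcₙ f b :=
        cfcₙ_mul _ f b (hfcont.mul continuous_id').continuousOn (by simp [hf0])
          hfcont.continuousOn hf0
      have : y * b * y = cfcₙ (fun s => f s * s * f s) b := by
        rw [hy, e1, e2, hid]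
      rw [this]
      apply norm_cfcₙ_le
      intro s hs
      obtain ⟨h1, _, h3⟩ := hfbound s (hSnn s hs)
      have : f s * s * f s = s * (f s * f s) := by ring
      rw [Real.norm_eq_abs, this, abs_of_nonneg (mul_nonneg (hSnn s hs) (mul_nonneg h1 h1))]
      exact h3
    have hn2 : ‖x * y‖ * ‖x * y‖ ≤ 4 * t := by
      rw [← CStarRing.norm_star_mul_self, hstar]; exact hybyn
    have : ‖x * y‖ ≤ Real.sqrt (4 * t) := by
      rw [← Real.sqrt_mul_self (norm_nonneg (x * y))]
      exact Real.sqrt_le_sqrt hn2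
    rwa [show (4:ℝ) * t = 2 ^ 2 * t by norm_num, Real.sqrt_mul (by positivity),
      Real.sqrt_sq (by norm_num : (0:ℝ) ≤ 2)] at this
  -- contradiction
  have key : (1:ℝ) ≤ 3 * C * Real.sqrt t := by
    have h1 : y * y = a * (x * y) := by rw [← hax, mul_assoc]
    have h2 : ‖y * y‖ ≤ ‖a‖ * ‖x * y‖ := h1 ▸ norm_mul_le a (x * y)
    have h3 : ‖a‖ * ‖x * y‖ ≤ (C * (3 / 2)) * (2 * Real.sqrt t) :=
      mul_le_mul hna' hxynorm (norm_nonneg _) (by positivity)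
    calc (1:ℝ) ≤ ‖y * y‖ := one_le
      _ ≤ (C * (3 / 2)) * (2 * Real.sqrt t) := h2.trans h3
      _ = 3 * C * Real.sqrt t := by ring
  have hsq : Real.sqrt t < 1 / (3 * C + 1) := by
    have := Real.sqrt_lt_sqrt (le_of_lt htpos) htδ
    rwa [Real.sqrt_sq (by positivity)] at this
  have h1 : 3 * C * Real.sqrt t < 3 * C * (1 / (3 * C + 1)) :=
    mul_lt_mul_of_pos_left hsq (by positivity)
  have h2 : 3 * C * (1 / (3 * C + 1)) < 1 := by
    rw [mul_one_div, div_lt_one (by positivity)]; linarith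
  linarith

theorem closed_principal_left_ideal_generated_by_projection
    {A : Type*} [NonUnitalCStarAlgebra A] (x : A)
    (hc : IsClosed {y : A | ∃ a : A, y = a * x}) :
    ∃ e : A, e ∈ {y : A | ∃ a : A, y = a * x} ∧ star e = e ∧ e * e = e ∧
      {y : A | ∃ a : A, y = a * x} = {y : A | ∃ a : A, y = a * e} ∧
      ∀ y ∈ {y : A | ∃ a : A, y = a * x}, y * e = y := by
  obtain ⟨δ, hδ, hgap⟩ := aux_gap x hc
  set b : A := star x * x with hb
  have hsa : IsSelfAdjoint b := IsSelfAdjoint.star_mul_self x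
  -- the functions
  set m : ℝ → ℝ := fun s => min (max 0 s / δ ^ 2) (1 / max s δ) with hm
  have hmcont : Continuous m := by
    apply Continuous.min (by fun_prop)
    exact continuous_const.div (continuous_id.max continuous_const)
      fun s => ne_of_gt (lt_of_lt_of_le hδ (le_max_right s δ))
  have hm0 : m 0 = 0 := by
    show min ((0 ⊔ (0:ℝ)) / δ ^ 2) (1 / ((0:ℝ) ⊔ δ)) = 0
    rw [max_self, zero_div, max_eq_right hδ.le, min_eq_left (by positivity)]
  set k : ℝ → ℝ := fun s => m s * s with hk
  have hkcont : Continuous k := by fun_prop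
  have hk0 : k 0 = 0 := by simp [hk]
  -- values on the quasispectrum
  have hkval : ∀ s ∈ quasispectrum ℝ b, k s = 0 ∨ k s = 1 := by
    intro s hs
    rcases hgap s hs with h0 | hge
    · left; simp [hk, h0]
    · right
      have hspos : 0 < s := lt_of_lt_of_le hδ hge
      have h1 : max 0 s = s := max_eq_right hspos.le
      have h2 : max s δ = s := max_eq_left hge
      have h3 : m s = 1 / s := by
        rw [hm]
        simp only [h1, h2]
        rw [min_eq_right]
        rw [div_le_div_iff₀ hspos (by positivity)]
        nlinarith
      rw [hk]; simp only [h3]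
      field_simp
  have hk_of_ge : ∀ s ∈ quasispectrum ℝ b, δ ≤ s → k s = 1 := by
    intro s hs hge
    rcases hkval s hs with h0 | h1
    · exfalso
      have hspos : 0 < s := lt_of_lt_of_le hδ hge
      -- k s = 0 with s ≥ δ is impossible since k s = 1 there; recompute
      have h1 : max 0 s = s := max_eq_right hspos.le
      have h2 : max s δ = s := max_eq_left hge
      have h3 : m s = 1 / s := by
        rw [hm]; simp only [h1, h2]
        rw [min_eq_right]
        rw [div_le_div_iff₀ hspos (by positivity)]
        nlinarith
      rw [hk] at h0; simp only [h3] at h0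
      field_simp at h0; exact one_ne_zero h0
    · exact h1
  set e : A := cfcₙ k b with he
  have hid : cfcₙ (fun s : ℝ => s) b = b := cfcₙ_id' ℝ b
  -- e ∈ J
  have he_eq : e = cfcₙ m b * b := by
    rw [he, hk]
    calc cfcₙ (fun s => m s * s) b = cfcₙ m b * cfcₙ (fun s : ℝ => s) b :=
          cfcₙ_mul m _ b hmcont.continuousOn hm0 continuous_id'.continuousOn rfl
      _ = cfcₙ m b * b := by rw [hid]
  have he_mem : ∃ a : A, e = a * x := ⟨cfcₙ m b * star x, by rw [he_eq, hb, mul_assoc]⟩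
  -- star e = e
  have he_sa : IsSelfAdjoint e := cfcₙ_predicate k b
  -- e * e = e
  have hee : e * e = e := by
    rw [he, ← cfcₙ_mul k k b hkcont.continuousOn hk0 hkcont.continuousOn hk0]
    apply cfcₙ_congr
    intro s hs
    rcases hkval s hs with h0 | h0 <;> simp [h0]
  -- b * e = b
  have hbe : b * e = b := by
    have step : cfcₙ (fun s => s * k s) b = cfcₙ (fun s : ℝ => s) b := by
      apply cfcₙ_congr
      intro s hs
      rcases hgap s hs with h0 | hge
      · simp [h0]
      · simp [hk_of_ge s hs hge]
    calc b * e = cfcₙ (fun s : ℝ => s) b * cfcₙ k b := by rw [hid, he]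
      _ = cfcₙ (fun s => s * k s) b :=
          (cfcₙ_mul _ k b continuous_id'.continuousOn rfl hkcont.continuousOn hk0).symm
      _ = b := by rw [step, hid]
  -- e * b = b
  have heb : e * b = b := by
    have step : cfcₙ (fun s => k s * s) b = cfcₙ (fun s : ℝ => s) b := by
      apply cfcₙ_congr
      intro s hs
      rcases hgap s hs with h0 | hge
      · simp [h0]
      · simp [hk_of_ge s hs hge]
    calc e * b = cfcₙ k b * cfcₙ (fun s : ℝ => s) b := by rw [hid, he]
      _ = cfcₙ (fun s => k s * s) b :=
          (cfcₙ_mul k _ b hkcont.continuousOn hk0 continuous_id'.continuousOn rfl).symm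
      _ = b := by rw [step, hid]
  -- x * e = x
  have hxe : x * e = x := by
    have hd : star (x * e - x) * (x * e - x) = 0 := by
      have expand : star (x * e - x) * (x * e - x) = e * b * e - e * b - b * e + b := by
        rw [star_sub, star_mul, he_sa.star_eq, hb]
        noncomm_ring
      rw [expand, heb, hbe]
      abel
    have : ‖x * e - x‖ * ‖x * e - x‖ = 0 := by
      rw [← CStarRing.norm_star_mul_self, hd, norm_zero]
    have h0 : ‖x * e - x‖ = 0 := by nlinarith [norm_nonneg (x * e - x)]
    have h1 := norm_eq_zero.mp h0
    have := sub_eq_zero.mp h1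
    exact this
  refine ⟨e, he_mem, he_sa.star_eq, hee, ?_, ?_⟩
  · ext y
    constructor
    · rintro ⟨a, rfl⟩
      exact ⟨a * x, by rw [mul_assoc, hxe]⟩
    · rintro ⟨a, rfl⟩
      obtain ⟨c, hce⟩ := he_mem
      exact ⟨a * c, by rw [hce, ← mul_assoc]⟩
  · rintro y ⟨a, rfl⟩
    rw [mul_assoc, hxe]
end

section
/- Let A be a C*-algebra, let 𝓜 denote its multiplier algebra (Mathlib's DoubleCentralizer 𝓜(ℂ, A)) with canonical *-embedding ι : A → 𝓜, and let x ∈ 𝓜. Define J = {b ∈ A : ∃ a ∈ A, ι(b) = ι(a) * x}, and suppose J is norm-closed in A. Then there exists a projection e ∈ 𝓜 (e = e* and e * e = e) such that J = {b ∈ A : ∃ a ∈ A, ι(b) = ι(a) * e}. -/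
open Filter Topology
open scoped MultiplierAlgebra

section Helpers
variable {A : Type*} [NonUnitalCStarAlgebra A]

lemma MP.coe_norm (a : A) : ‖(a : 𝓜(ℂ, A))‖ = ‖a‖ := by
  rw [← DoubleCentralizer.norm_fst, DoubleCentralizer.coe_fst,
    ContinuousLinearMap.opNorm_mul_apply]

lemma MP.coe_inj {a b : A} (h : (a : 𝓜(ℂ, A)) = (b : 𝓜(ℂ, A))) : a = b := by
  have h2 : ((a - b : A) : 𝓜(ℂ, A)) = 0 := by
    have h3 : ((a - b : A) : 𝓜(ℂ, A)) = (a : 𝓜(ℂ, A)) - (b : 𝓜(ℂ, A)) :=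
      map_sub (DoubleCentralizer.coeHom (𝕜 := ℂ) (A := A)) a b
    rw [h3, h, sub_self]
  have h4 := MP.coe_norm (a - b)
  rw [h2, norm_zero] at h4
  rw [eq_comm, norm_eq_zero, sub_eq_zero] at h4
  exact h4

lemma MP.fst_mul (m : 𝓜(ℂ, A)) (a b : A) : m.fst (a * b) = m.fst a * b := by
  set d := m.fst (a * b) - m.fst a * b with hd
  have key : ∀ z : A, z * d = 0 := by
    intro z
    rw [hd, mul_sub, ← m.central, ← mul_assoc, m.central, mul_assoc, sub_self]
  have h0 := key (star d)
  rw [CStarRing.star_mul_self_eq_zero_iff] at h0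
  exact sub_eq_zero.mp h0

lemma MP.snd_mul (m : 𝓜(ℂ, A)) (a c : A) : m.snd (c * a) = c * m.snd a := by
  set d := m.snd (c * a) - c * m.snd a with hd
  have key : ∀ z : A, d * z = 0 := by
    intro z
    rw [hd, sub_mul, m.central, mul_assoc, ← m.central, mul_assoc, sub_self]
  have h0 := key (star d)
  rw [CStarRing.mul_star_self_eq_zero_iff] at h0
  exact sub_eq_zero.mp h0

lemma MP.mul_coe (m : 𝓜(ℂ, A)) (a : A) :
    m * (a : 𝓜(ℂ, A)) = ((m.fst a : A) : 𝓜(ℂ, A)) := by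
  refine DoubleCentralizer.ext ℂ A _ _ (Prod.ext ?_ ?_)
  · refine ContinuousLinearMap.ext fun b => ?_
    show m.fst (a * b) = (ContinuousLinearMap.mul ℂ A (m.fst a)) b
    rw [ContinuousLinearMap.mul_apply', MP.fst_mul]
  · refine ContinuousLinearMap.ext fun c => ?_
    show (ContinuousLinearMap.mul ℂ A).flip a (m.snd c)
        = (ContinuousLinearMap.mul ℂ A).flip (m.fst a) c
    show m.snd c * a = c * m.fst a
    exact m.central c a

lemma MP.coe_mul (m : 𝓜(ℂ, A)) (a : A) :
    (a : 𝓜(ℂ, A)) * m = ((m.snd a : A) : 𝓜(ℂ, A)) := by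
  refine DoubleCentralizer.ext ℂ A _ _ (Prod.ext ?_ ?_)
  · refine ContinuousLinearMap.ext fun b => ?_
    show a * m.fst b = (ContinuousLinearMap.mul ℂ A (m.snd a)) b
    rw [ContinuousLinearMap.mul_apply']
    exact (m.central a b).symm
  · refine ContinuousLinearMap.ext fun c => ?_
    show m.snd (c * a) = (ContinuousLinearMap.mul ℂ A).flip (m.snd a) c
    show m.snd (c * a) = c * m.snd a
    exact MP.snd_mul m a c

lemma MP.coe_star (a : A) : ((star a : A) : 𝓜(ℂ, A)) = star (a : 𝓜(ℂ, A)) :=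
  map_star (DoubleCentralizer.coeHom (𝕜 := ℂ) (A := A)) a

end Helpers

set_option maxHeartbeats 2000000 in
theorem closed_principal_left_ideal_of_multiplier
    {A : Type*} [NonUnitalCStarAlgebra A] (x : 𝓜(ℂ, A))
    (hc : IsClosed {b : A | ∃ a : A, (b : 𝓜(ℂ, A)) = (a : 𝓜(ℂ, A)) * x}) :
    ∃ e : 𝓜(ℂ, A), star e = e ∧ e * e = e ∧
      {b : A | ∃ a : A, (b : 𝓜(ℂ, A)) = (a : 𝓜(ℂ, A)) * x}
        = {b : A | ∃ a : A, (b : 𝓜(ℂ, A)) = (a : 𝓜(ℂ, A)) * e} := by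
  set t : 𝓜(ℂ, A) := star x * x with ht
  have htsa : IsSelfAdjoint t := IsSelfAdjoint.star_mul_self x
  have hspec : ∀ μ ∈ spectrum ℝ t, 0 ≤ μ := spectrum_star_mul_self_nonneg
  -- the submodule K = x* A
  let KS : Submodule ℂ A :=
    { carrier := {c : A | ∃ a : A, (c : 𝓜(ℂ, A)) = star x * (a : 𝓜(ℂ, A))}
      add_mem' := by
        rintro c d ⟨a, ha⟩ ⟨b, hb⟩
        refine ⟨a + b, ?_⟩
        have h1 : ((c + d : A) : 𝓜(ℂ, A)) = (c : 𝓜(ℂ, A)) + (d : 𝓜(ℂ, A)) :=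
          map_add (DoubleCentralizer.coeHom (𝕜 := ℂ) (A := A)) c d
        have h2 : ((a + b : A) : 𝓜(ℂ, A)) = (a : 𝓜(ℂ, A)) + (b : 𝓜(ℂ, A)) :=
          map_add (DoubleCentralizer.coeHom (𝕜 := ℂ) (A := A)) a b
        rw [h1, h2, ha, hb, mul_add]
      zero_mem' := by
        refine ⟨0, ?_⟩
        have h1 : ((0 : A) : 𝓜(ℂ, A)) = 0 :=
          map_zero (DoubleCentralizer.coeHom (𝕜 := ℂ) (A := A))
        rw [h1, mul_zero]
      smul_mem' := by
        rintro r c ⟨a, ha⟩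
        refine ⟨r • a, ?_⟩
        have h1 : ((r • c : A) : 𝓜(ℂ, A)) = r • (c : 𝓜(ℂ, A)) :=
          map_smul (DoubleCentralizer.coeHom (𝕜 := ℂ) (A := A)) r c
        have h2 : ((r • a : A) : 𝓜(ℂ, A)) = r • (a : 𝓜(ℂ, A)) :=
          map_smul (DoubleCentralizer.coeHom (𝕜 := ℂ) (A := A)) r a
        rw [h1, h2, ha, mul_smul_comm] }
  have hKc : IsClosed (KS : Set A) := by
    have hset : (KS : Set A) =
        star ⁻¹' {b : A | ∃ a : A, (b : 𝓜(ℂ, A)) = (a : 𝓜(ℂ, A)) * x} := by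
      ext c
      constructor
      · rintro ⟨a, ha⟩
        refine ⟨star a, ?_⟩
        rw [MP.coe_star, MP.coe_star, ha, star_mul, star_star]
      · rintro ⟨a, ha⟩
        refine ⟨star a, ?_⟩
        have := congrArg star ha
        rw [← MP.coe_star, star_star, star_mul, ← MP.coe_star] at this
        exact this
    rw [hset]
    exact hc.preimage continuous_star
  haveI : CompleteSpace KS := hKc.completeSpace_coe
  have hmem : ∀ a : A, (star x).fst a ∈ KS := fun a => ⟨a, (MP.mul_coe (star x) a).symm⟩
  let Φ : A →L[ℂ] KS := ((star x).fst).codRestrict KS hmem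
  have hsurj : Function.Surjective Φ := by
    rintro ⟨c, a, hca⟩
    refine ⟨a, Subtype.ext ?_⟩
    show (star x).fst a = c
    exact MP.coe_inj (by rw [← MP.mul_coe (star x) a, ← hca])
  obtain ⟨C, hC0, hCf⟩ := Φ.exists_preimage_norm_le hsurj
  set δ : ℝ := 1 / (18 * C ^ 2) with hδdef
  have hδ : 0 < δ := by positivity
  -- the spectral gap
  have hgap : ∀ μ ∈ spectrum ℝ t, μ = 0 ∨ δ < μ := by
    intro lam hlam
    rcases (hspec lam hlam).eq_or_lt with h0 | hpos
    · exact Or.inl h0.symm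
    right
    set f : ℝ → ℝ := fun μ => max 0 (1 - (2 / lam) * |μ - lam|) with hfdef
    have hfc : Continuous f := by
      apply continuous_const.max
      fun_prop
    have hf0 : ∀ μ, 0 ≤ f μ := fun μ => le_max_left _ _
    have hf1 : ∀ μ, f μ ≤ 1 := by
      intro μ
      apply max_le (by norm_num)
      have h1 : 0 ≤ (2 / lam) * |μ - lam| := by positivity
      linarith
    have hflam : f lam = 1 := by simp [hfdef]
    have hfsupp : ∀ μ, f μ ≠ 0 → lam / 2 ≤ μ ∧ μ ≤ 3 * lam / 2 := by
      intro μ h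
      have h1 : 0 < 1 - (2 / lam) * |μ - lam| := by
        by_contra h2
        push_neg at h2
        exact h (max_eq_left h2)
      have h1' : 2 * |μ - lam| / lam < 1 := by
        rw [← div_mul_eq_mul_div]
        linarith
      have h4 : 2 * |μ - lam| < lam := (div_lt_one hpos).mp h1'
      have h5 := abs_lt.mp (show |μ - lam| < lam / 2 by linarith)
      constructor <;> linarith [h5.1, h5.2]
    set q : ℝ → ℝ := fun μ => f μ / max μ (lam / 2) with hqdef
    have hden : ∀ μ : ℝ, (0 : ℝ) < max μ (lam / 2) :=
      fun μ => lt_of_lt_of_le (by linarith) (le_max_right _ _)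
    have hqc : Continuous q :=
      hfc.div (continuous_id.max continuous_const) fun μ => (hden μ).ne'
    set z₂ : 𝓜(ℂ, A) := cfc (fun μ => f μ * f μ) t with hz₂def
    have hz₂n : 1 ≤ ‖z₂‖ := by
      have h1 := norm_apply_le_norm_cfc (fun μ => f μ * f μ) t hlam
        ((hfc.mul hfc).continuousOn) htsa
      have h2 : ‖f lam * f lam‖ ≤ ‖cfc (fun μ => f μ * f μ) t‖ := h1
      rw [hflam] at h2
      simpa using h2
    obtain ⟨c, hcgt⟩ : ∃ c : A, 1 / 2 * ‖c‖ < ‖z₂.fst c‖ := by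
      by_contra hcon
      push_neg at hcon
      have h1 : ‖z₂.fst‖ ≤ 1 / 2 :=
        ContinuousLinearMap.opNorm_le_bound _ (by norm_num) fun c => by
          have := hcon c; linarith
      rw [DoubleCentralizer.norm_fst] at h1
      linarith
    have hcpos : 0 < ‖c‖ := by
      rcases (norm_nonneg c).eq_or_lt with h | h
      · exfalso
        have hc0 : c = 0 := norm_eq_zero.mp h.symm
        rw [hc0] at hcgt
        simp at hcgt
      · exact h
    set w : 𝓜(ℂ, A) := cfc (fun μ => μ * f μ) t with hwdef
    have hw : w = t * cfc f t := by
      have h1 := cfc_mul (R := ℝ) (fun μ : ℝ => μ) f t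
        continuous_id.continuousOn hfc.continuousOn
      rw [cfc_id' ℝ t htsa] at h1
      exact h1
    have hwn : ‖w‖ ≤ 3 * lam / 2 := by
      apply norm_cfc_le (by positivity)
      intro μ hμ
      show |μ * f μ| ≤ 3 * lam / 2
      by_cases hfμ : f μ = 0
      · simp [hfμ]
        positivity
      · obtain ⟨h1, h2⟩ := hfsupp μ hfμ
        rw [abs_of_nonneg (mul_nonneg (by linarith) (hf0 μ))]
        nlinarith [hf0 μ, hf1 μ]
    set b : A := w.fst c with hbdef
    have hbι : (b : 𝓜(ℂ, A)) = w * (c : 𝓜(ℂ, A)) := (MP.mul_coe w c).symm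
    have hbmem : b ∈ KS := by
      refine ⟨x.fst ((cfc f t).fst c), ?_⟩
      rw [hbι, hw, mul_assoc, MP.mul_coe (cfc f t) c, ht, mul_assoc,
        MP.mul_coe x ((cfc f t).fst c)]
    have hbn : ‖b‖ ≤ 3 * lam / 2 * ‖c‖ := by
      have h1 : ‖(b : 𝓜(ℂ, A))‖ ≤ ‖w‖ * ‖(c : 𝓜(ℂ, A))‖ := hbι ▸ norm_mul_le w _
      rw [MP.coe_norm, MP.coe_norm] at h1
      calc ‖b‖ ≤ ‖w‖ * ‖c‖ := h1
        _ ≤ 3 * lam / 2 * ‖c‖ := mul_le_mul_of_nonneg_right hwn (norm_nonneg c)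
    obtain ⟨a, hΦa, han⟩ := hCf ⟨b, hbmem⟩
    have hab : (star x).fst a = b := congrArg Subtype.val hΦa
    have hbxa : (b : 𝓜(ℂ, A)) = star x * (a : 𝓜(ℂ, A)) := by
      rw [← hab, MP.mul_coe (star x) a]
    have han' : ‖a‖ ≤ C * ‖b‖ := han
    set u : 𝓜(ℂ, A) := cfc q t * star x with hudef
    have hchain : z₂ * (c : 𝓜(ℂ, A)) = u * (a : 𝓜(ℂ, A)) := by
      have h1 : cfc q t * w = z₂ := by
        rw [← cfc_mul q (fun μ => μ * f μ) t hqc.continuousOn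
          (continuous_id.mul hfc).continuousOn]
        apply cfc_congr
        intro μ _
        show q μ * (μ * f μ) = f μ * f μ
        by_cases hfμ : f μ = 0
        · simp [hqdef, hfμ]
        · obtain ⟨h1, h2⟩ := hfsupp μ hfμ
          have hμ0 : μ ≠ 0 := by intro h; rw [h] at h1; linarith
          simp only [hqdef]
          rw [max_eq_left (by linarith : lam / 2 ≤ μ)]
          field_simp
      calc z₂ * (c : 𝓜(ℂ, A)) = cfc q t * w * (c : 𝓜(ℂ, A)) := by rw [h1]
        _ = cfc q t * (w * (c : 𝓜(ℂ, A))) := by rw [mul_assoc]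
        _ = cfc q t * (b : 𝓜(ℂ, A)) := by rw [← hbι]
        _ = cfc q t * (star x * (a : 𝓜(ℂ, A))) := by rw [hbxa]
        _ = u * (a : 𝓜(ℂ, A)) := by rw [hudef, mul_assoc]
    have hu2 : ‖u‖ * ‖u‖ ≤ 2 / lam := by
      have h1 : ‖u‖ * ‖u‖ = ‖u * star u‖ := (CStarRing.norm_self_mul_star).symm
      have h2 : u * star u = cfc (fun μ => q μ * μ * q μ) t := by
        have hsq : star (cfc q t) = cfc q t := (IsSelfAdjoint.cfc).star_eq
        have hqm := cfc_mul (R := ℝ) q (fun μ : ℝ => μ) t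
          hqc.continuousOn continuous_id.continuousOn
        rw [cfc_id' ℝ t htsa] at hqm
        have hqmq := cfc_mul (R := ℝ) (fun μ => q μ * μ) q t
          (hqc.mul continuous_id).continuousOn hqc.continuousOn
        rw [hudef, star_mul, star_star, hsq]
        calc cfc q t * star x * (x * cfc q t)
            = cfc q t * (star x * x) * cfc q t := by
              rw [mul_assoc, mul_assoc, mul_assoc]
          _ = cfc q t * t * cfc q t := by rw [← ht]
          _ = cfc (fun μ => q μ * μ) t * cfc q t := by rw [hqm]
          _ = cfc (fun μ => q μ * μ * q μ) t := by rw [hqmq]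
      rw [h1, h2]
      apply norm_cfc_le (by positivity)
      intro μ hμ
      show |q μ * μ * q μ| ≤ 2 / lam
      by_cases hfμ : f μ = 0
      · simp [hqdef, hfμ]
        positivity
      · obtain ⟨ha1, ha2⟩ := hfsupp μ hfμ
        have hμpos : 0 < μ := by linarith
        have key : q μ * μ * q μ = f μ * f μ / μ := by
          simp only [hqdef]
          rw [max_eq_left (by linarith : lam / 2 ≤ μ)]
          field_simp
        rw [key, abs_of_nonneg (by positivity)]
        rw [div_le_div_iff₀ hμpos hpos]
        nlinarith [mul_le_mul (hf1 μ) (hf1 μ) (hf0 μ) zero_le_one, hpos.le, ha1]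
    have hfinal : 1 / 2 * ‖c‖ < ‖u‖ * (C * (3 * lam / 2 * ‖c‖)) := by
      calc 1 / 2 * ‖c‖ < ‖z₂.fst c‖ := hcgt
        _ = ‖((z₂.fst c : A) : 𝓜(ℂ, A))‖ := (MP.coe_norm _).symm
        _ = ‖z₂ * (c : 𝓜(ℂ, A))‖ := by rw [MP.mul_coe z₂ c]
        _ = ‖u * (a : 𝓜(ℂ, A))‖ := by rw [hchain]
        _ ≤ ‖u‖ * ‖(a : 𝓜(ℂ, A))‖ := norm_mul_le _ _
        _ = ‖u‖ * ‖a‖ := by rw [MP.coe_norm]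
        _ ≤ ‖u‖ * (C * ‖b‖) := mul_le_mul_of_nonneg_left han' (norm_nonneg u)
        _ ≤ ‖u‖ * (C * (3 * lam / 2 * ‖c‖)) := by
            apply mul_le_mul_of_nonneg_left _ (norm_nonneg u)
            exact mul_le_mul_of_nonneg_left hbn (le_of_lt hC0)
    have h12 : 1 / 2 < ‖u‖ * (C * (3 * lam / 2)) := by
      nlinarith [hcpos]
    have hu2l : ‖u‖ * ‖u‖ * lam ≤ 2 := by
      have h3 := mul_le_mul_of_nonneg_right hu2 (le_of_lt hpos)
      rwa [div_mul_cancel₀ _ hpos.ne'] at h3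
    rw [hδdef, div_lt_iff₀ (by positivity : (0:ℝ) < 18 * C ^ 2)]
    nlinarith [mul_lt_mul'' h12 h12 (by norm_num : (0:ℝ) ≤ 1/2) (by norm_num : (0:ℝ) ≤ 1/2),
      mul_le_mul_of_nonneg_right hu2l (by positivity : (0:ℝ) ≤ C ^ 2 * lam),
      sq_nonneg (‖u‖ * C), norm_nonneg u]
  -- the projection
  set f₀ : ℝ → ℝ := fun μ => min 1 (max 0 (μ / δ)) with hf₀def
  have hf₀c : Continuous f₀ := by
    apply continuous_const.min
    apply continuous_const.max
    fun_prop
  have hf₀0 : f₀ 0 = 0 := by simp [hf₀def]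
  have hf₀1 : ∀ μ : ℝ, δ < μ → f₀ μ = 1 := by
    intro μ h
    have h1 : (1:ℝ) ≤ μ / δ := by rw [le_div_iff₀ hδ]; linarith
    simp only [hf₀def]
    rw [max_eq_right (by linarith), min_eq_left h1]
  set e : 𝓜(ℂ, A) := cfc f₀ t with hedef
  have hesa : star e = e := (IsSelfAdjoint.cfc).star_eq
  have heid : e * e = e := by
    rw [hedef, ← cfc_mul f₀ f₀ t hf₀c.continuousOn hf₀c.continuousOn]
    apply cfc_congr
    intro μ hμ
    show f₀ μ * f₀ μ = f₀ μ
    rcases hgap μ hμ with h | h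
    · rw [h, hf₀0]; ring
    · rw [hf₀1 μ h]; ring
  have h1e : 1 - e = cfc (fun μ => 1 - f₀ μ) t := by
    rw [cfc_sub (fun _ => (1:ℝ)) f₀ t continuous_const.continuousOn hf₀c.continuousOn,
      hedef]
    congr 1
    exact (cfc_one ℝ t htsa).symm
  have hxe : star x = e * star x := by
    have hz : (1 - e) * star x * star ((1 - e) * star x) = 0 := by
      have hsa1e : star (1 - e) = 1 - e := by rw [star_sub, star_one, hesa]
      rw [star_mul, star_star, hsa1e]
      have hgm := cfc_mul (R := ℝ) (fun μ => (1 - f₀ μ) * μ) (fun μ => 1 - f₀ μ) t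
        ((continuous_const.sub hf₀c).mul continuous_id).continuousOn
        (continuous_const.sub hf₀c).continuousOn
      have hgm2 := cfc_mul (R := ℝ) (fun μ => 1 - f₀ μ) (fun μ : ℝ => μ) t
        (continuous_const.sub hf₀c).continuousOn continuous_id.continuousOn
      rw [cfc_id' ℝ t htsa] at hgm2
      calc (1 - e) * star x * (x * (1 - e))
          = (1 - e) * (star x * x) * (1 - e) := by
            rw [mul_assoc, mul_assoc, mul_assoc]
        _ = (1 - e) * t * (1 - e) := by rw [← ht]
        _ = cfc (fun μ => (1 - f₀ μ) * μ) t * cfc (fun μ => 1 - f₀ μ) t := by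
            rw [h1e, ← hgm2]
        _ = cfc (fun μ => (1 - f₀ μ) * μ * (1 - f₀ μ)) t := hgm.symm
        _ = cfc (0 : ℝ → ℝ) t := by
            apply cfc_congr
            intro μ hμ
            show (1 - f₀ μ) * μ * (1 - f₀ μ) = 0
            rcases hgap μ hμ with h | h
            · rw [h]; ring
            · rw [hf₀1 μ h]; ring
        _ = 0 := cfc_zero ℝ t
    have h0 : (1 - e) * star x = 0 :=
      (CStarRing.mul_star_self_eq_zero_iff ((1 - e) * star x)).mp hz
    rw [sub_mul, one_mul, sub_eq_zero] at h0
    exact h0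
  set q₀ : ℝ → ℝ := fun μ => f₀ μ / max μ δ with hq₀def
  have hq₀c : Continuous q₀ :=
    hf₀c.div (continuous_id.max continuous_const)
      (fun μ => (lt_of_lt_of_le hδ (le_max_right _ _)).ne')
  have heq : e = t * cfc q₀ t := by
    have h1 := cfc_mul (R := ℝ) (fun μ : ℝ => μ) q₀ t
      continuous_id.continuousOn hq₀c.continuousOn
    rw [cfc_id' ℝ t htsa] at h1
    rw [hedef, ← h1]
    apply cfc_congr
    intro μ hμ
    show f₀ μ = μ * q₀ μ
    rcases hgap μ hμ with h | h
    · rw [h, hf₀0]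
      simp
    · have hμpos : 0 < μ := lt_trans hδ h
      rw [hf₀1 μ h]
      simp only [hq₀def]
      rw [hf₀1 μ h, max_eq_left (le_of_lt h)]
      field_simp
  refine ⟨e, hesa, heid, ?_⟩
  ext b
  simp only [Set.mem_setOf_eq]
  constructor
  · rintro ⟨a, hba⟩
    refine ⟨b, ?_⟩
    have h1 : star (b : 𝓜(ℂ, A)) = e * star (b : 𝓜(ℂ, A)) := by
      calc star (b : 𝓜(ℂ, A)) = star x * star (a : 𝓜(ℂ, A)) := by rw [hba, star_mul]
        _ = e * star x * star (a : 𝓜(ℂ, A)) := by rw [← hxe]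
        _ = e * star (b : 𝓜(ℂ, A)) := by rw [mul_assoc, ← star_mul, ← hba]
    have h2 := congrArg star h1
    rw [star_star, star_mul, star_star, hesa] at h2
    exact h2
  · rintro ⟨a, hba⟩
    set d : A := (cfc q₀ t).fst (star a) with hddef
    have h2 : star (b : 𝓜(ℂ, A)) = star x * ((x.fst d : A) : 𝓜(ℂ, A)) := by
      calc star (b : 𝓜(ℂ, A)) = star e * star (a : 𝓜(ℂ, A)) := by rw [hba, star_mul]
        _ = e * ((star a : A) : 𝓜(ℂ, A)) := by rw [hesa, MP.coe_star]
        _ = t * (cfc q₀ t * ((star a : A) : 𝓜(ℂ, A))) := by rw [heq, mul_assoc]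
        _ = t * ((d : A) : 𝓜(ℂ, A)) := by rw [MP.mul_coe (cfc q₀ t) (star a), hddef]
        _ = star x * (x * ((d : A) : 𝓜(ℂ, A))) := by rw [ht, mul_assoc]
        _ = star x * ((x.fst d : A) : 𝓜(ℂ, A)) := by rw [MP.mul_coe x d]
    refine ⟨star (x.fst d), ?_⟩
    have h3 := congrArg star h2
    rw [star_star, star_mul, star_star, ← MP.coe_star] at h3
    exact h3
end

section
/- Let J be a closed left ideal of a C*-algebra A, and suppose J possesses a right identity, i.e. there is f ∈ J with x * f = x for all x ∈ J. Then there exists a projection e ∈ J (e = e* and e * e = e, with ‖e‖ = 1 if J ≠ {0}) such that x * e = x for all x ∈ J; moreover, every right contractive approximate identity (e_i) of J converges to e in norm. -/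
set_option maxHeartbeats 1000000

open Filter Topology

theorem left_ideal_right_identity_norm_one
    {A : Type u} [NonUnitalCStarAlgebra A]
    (J : Submodule ℂ A) (hJc : IsClosed (J : Set A)) (hJ : ∀ a : A, ∀ x ∈ J, a * x ∈ J)
    (f : A) (hf : f ∈ J) (hfr : ∀ x ∈ J, x * f = x) :
    ∃ e ∈ J, star e = e ∧ e * e = e ∧ (J ≠ ⊥ → ‖e‖ = 1) ∧ (∀ x ∈ J, x * e = x) ∧
      ∀ (ι : Type*) [Preorder ι] [Nonempty ι] [IsDirected ι (· ≤ ·)] (g : ι → A),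
        (∀ i, g i ∈ J) → (∀ i, ‖g i‖ ≤ 1) →
        (∀ x ∈ J, Tendsto (fun i => ‖x * g i - x‖) atTop (𝓝 0)) →
        Tendsto (fun i => ‖g i - e‖) atTop (𝓝 0) := by
  letI : PartialOrder (Unitization ℂ A) := CStarAlgebra.spectralOrder _
  letI : StarOrderedRing (Unitization ℂ A) := CStarAlgebra.spectralOrderedRing _
  have hff : f * f = f := hfr f hf
  set F : Unitization ℂ A := (f : Unitization ℂ A) with hFdef
  have hFF : F * F = F := by rw [hFdef, ← Unitization.inr_mul, hff]
  have hsFsF : star F * star F = star F := by rw [← star_mul, hFF]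
  have hFF' : ∀ x : Unitization ℂ A, F * (F * x) = F * x := fun x => by
    rw [← mul_assoc, hFF]
  have hsFsF' : ∀ x : Unitization ℂ A, star F * (star F * x) = star F * x := fun x => by
    rw [← mul_assoc, hsFsF]
  set v : Unitization ℂ A := (F - star F) * (star F - F) with hvdef
  have hv : (0:Unitization ℂ A) ≤ v := by
    have : v = star (star F - F) * (star F - F) := by rw [star_sub, star_star]
    rw [this]; exact star_mul_self_nonneg _
  have hvsa : star v = v := by
    rw [hvdef, star_mul, star_sub, star_sub, star_star]
  have hu : IsUnit (1 + v) :=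
    CStarAlgebra.isUnit_of_le 1 (le_add_of_nonneg_right hv)
  obtain ⟨u, hu⟩ := hu
  have husa : star (u : Unitization ℂ A) = u := by rw [hu, star_add, star_one, hvsa]
  have haF : (1 + v) * F = F * (star F * F) := by
    rw [hvdef]
    simp only [add_mul, one_mul, sub_mul, mul_sub, mul_assoc, hFF, hsFsF, hFF', hsFsF']
    abel
  have hFa : F * (1 + v) = F * (star F * F) := by
    rw [hvdef]
    simp only [mul_add, mul_one, sub_mul, mul_sub, mul_assoc, hFF, hsFsF, hFF', hsFsF']
    abel
  have hCF : Commute (u : Unitization ℂ A) F := by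
    rw [hu]; exact haF.trans hFa.symm
  have hCsF : Commute (u : Unitization ℂ A) (star F) := by
    have := congrArg star hCF.eq
    rw [star_mul, star_mul, husa] at this
    exact this.symm
  have hCiF : Commute (↑u⁻¹ : Unitization ℂ A) F := hCF.units_inv_left
  have hCisF : Commute (↑u⁻¹ : Unitization ℂ A) (star F) := hCsF.units_inv_left
  have hiusa : star (↑u⁻¹ : Unitization ℂ A) = ↑u⁻¹ := by
    have h1 : star (↑u⁻¹ : Unitization ℂ A) * ↑u = 1 := by
      rw [← husa, ← star_mul, Units.mul_inv, star_one]
    calc star (↑u⁻¹ : Unitization ℂ A) = star ↑u⁻¹ * (↑u * ↑u⁻¹) := by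
            rw [Units.mul_inv, mul_one]
      _ = (star ↑u⁻¹ * ↑u) * ↑u⁻¹ := by rw [mul_assoc]
      _ = ↑u⁻¹ := by rw [h1, one_mul]
  -- the candidate element
  have hfst : (star F * ↑u⁻¹ : Unitization ℂ A).fst = 0 := by
    have : (star F).fst = 0 := by rw [hFdef, ← Unitization.inr_star]; simp
    rw [Unitization.fst_mul, this, zero_mul]
  set c : A := (star F * ↑u⁻¹ : Unitization ℂ A).snd with hcdef
  have hc : (c : Unitization ℂ A) = star F * ↑u⁻¹ := by
    conv_rhs => rw [← Unitization.inl_fst_add_inr_snd_eq (star F * ↑u⁻¹ : Unitization ℂ A)]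
    rw [hfst]; simp [hcdef]
  set e : A := c * f with hedef
  set k : Unitization ℂ A := star F * F with hkdef
  have hCik : Commute (↑u⁻¹ : Unitization ℂ A) k := hCisF.mul_right hCiF
  have hCk : Commute (u : Unitization ℂ A) k := hCsF.mul_right hCF
  have heU : (e : Unitization ℂ A) = k * ↑u⁻¹ := by
    rw [hedef, Unitization.inr_mul, hc, mul_assoc, hCiF.eq, ← mul_assoc, hkdef]
  have hkk : k * k = ↑u * k := by
    calc k * k = star F * (F * (star F * F)) := by rw [hkdef, mul_assoc]
      _ = star F * (F * (1+v)) := by rw [← hFa]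
      _ = star F * (F * ↑u) := by rw [← hu]
      _ = star F * (↑u * F) := by rw [← hCF.eq]
      _ = (star F * ↑u) * F := by rw [mul_assoc]
      _ = (↑u * star F) * F := by rw [hCsF.eq]
      _ = ↑u * k := by rw [hkdef, mul_assoc]
  have hstar : star e = e := by
    apply Unitization.inr_injective (R := ℂ)
    rw [Unitization.inr_star, heU, star_mul, hiusa, star_mul, star_star, ← hkdef, hCik.eq]
  have hee : e * e = e := by
    apply Unitization.inr_injective (R := ℂ)
    rw [Unitization.inr_mul, heU]
    calc (k * ↑u⁻¹) * (k * ↑u⁻¹) = k * (↑u⁻¹ * k * ↑u⁻¹) := by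
          simp only [mul_assoc]
      _ = k * (k * ↑u⁻¹ * ↑u⁻¹) := by rw [hCik.eq]
      _ = k * k * (↑u⁻¹ * ↑u⁻¹) := by simp only [mul_assoc]
      _ = k * (↑u * (↑u⁻¹ * ↑u⁻¹)) := by rw [hkk, hCk.eq, mul_assoc]
      _ = k * ↑u⁻¹ := by rw [Units.mul_inv_cancel_left]
  have hfe : f * e = f := by
    apply Unitization.inr_injective (R := ℂ)
    rw [Unitization.inr_mul, heU, ← hFdef, hkdef, ← mul_assoc, ← hFa, ← hu,
      Units.mul_inv_cancel_right]
  have hxe : ∀ x ∈ J, x * e = x := fun x hx => by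
    calc x * e = (x * f) * e := by rw [hfr x hx]
      _ = x * (f * e) := by rw [mul_assoc]
      _ = x * f := by rw [hfe]
      _ = x := hfr x hx
  have hnorm : ‖e‖ * ‖e‖ = ‖e‖ := by
    rw [← CStarRing.norm_star_mul_self (x := e), hstar, hee]
  have hnorm_le : ‖e‖ ≤ 1 := by nlinarith [norm_nonneg e]
  refine ⟨e, hJ c f hf, hstar, hee, ?_, hxe, ?_⟩
  · intro hne
    obtain ⟨x, hx, hx0⟩ := Submodule.exists_mem_ne_zero_of_ne_bot hne
    have he0 : e ≠ 0 := by
      intro h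
      exact hx0 (by rw [← hxe x hx, h, mul_zero])
    have hne0 : ‖e‖ ≠ 0 := norm_ne_zero_iff.mpr he0
    exact mul_left_cancel₀ hne0 (by rw [hnorm, mul_one])
  · intro ι _ _ _ g hgJ hgn hai
    have hr : Tendsto (fun i => ‖e * g i - e‖) atTop (𝓝 0) := hai e (hJ c f hf)
    -- the key quantitative bound
    have key : ∀ i, ‖g i - e‖ ^ 2 ≤ 4 * ‖e * g i - e‖ + ‖e * g i - e‖ ^ 2 := by
      intro i
      set G : Unitization ℂ A := ((g i : A) : Unitization ℂ A) with hGdef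
      set E : Unitization ℂ A := ((e : A) : Unitization ℂ A) with hEdef
      set R : Unitization ℂ A := ((e * g i - e : A) : Unitization ℂ A) with hRdef
      have hEsa : star E = E := by rw [hEdef, ← Unitization.inr_star, hstar]
      have hE2 : E * E = E := by rw [hEdef, ← Unitization.inr_mul, hee]
      have hEG : E * G = E + R := by
        rw [hRdef, Unitization.inr_sub, Unitization.inr_mul, ← hEdef, ← hGdef]
        abel
      have hGE : G * E = G := by
        rw [hGdef, hEdef, ← Unitization.inr_mul, hxe (g i) (hgJ i)]
      have hnG : ‖G‖ ≤ 1 := by rw [hGdef, Unitization.norm_inr]; exact hgn i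
      have hnE : ‖E‖ ≤ 1 := by rw [hEdef, Unitization.norm_inr]; exact hnorm_le
      have hnR : ‖R‖ = ‖e * g i - e‖ := by rw [hRdef, Unitization.norm_inr]
      have hEpos : (0:Unitization ℂ A) ≤ E := by
        calc (0:Unitization ℂ A) ≤ star E * E := star_mul_self_nonneg E
          _ = E := by rw [hEsa, hE2]
      have hE_le_one : E ≤ 1 := (CStarAlgebra.norm_le_one_iff_of_nonneg E hEpos).mp hnE
      have hGG_le_one : star G * G ≤ 1 := by
        refine (CStarAlgebra.norm_le_one_iff_of_nonneg _ (star_mul_self_nonneg G)).mp ?_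
        calc ‖star G * G‖ = ‖G‖ * ‖G‖ := CStarRing.norm_star_mul_self
          _ ≤ 1 := by nlinarith [norm_nonneg G]
      -- 0 ≤ E - star G * G
      have hpos : (0:Unitization ℂ A) ≤ E - star G * G := by
        have h2 : star E * (1 - star G * G) * E = E - star G * G := by
          have hEsGGE : E * (star G * G) * E = star G * G := by
            calc E * (star G * G) * E = (E * star G) * (G * E) := by
                  rw [mul_assoc, mul_assoc, mul_assoc]
              _ = (E * star G) * G := by rw [hGE]
              _ = star (G * E) * G := by rw [star_mul, hEsa]
              _ = star G * G := by rw [hGE]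
          calc star E * (1 - star G * G) * E = E * (1 - star G * G) * E := by rw [hEsa]
            _ = E * E - E * (star G * G) * E := by noncomm_ring
            _ = E - star G * G := by rw [hE2, hEsGGE]
        rw [← h2]
        exact star_left_conjugate_nonneg (by rwa [← sub_nonneg] at hGG_le_one) E
      -- E - star G * G ≤ -(E * R + star R * E + star R * R)
      have hle : E - star G * G ≤ -(E * R + star R * E + star R * R) := by
        have h3 : (0:Unitization ℂ A) ≤ star G * G - star (E * G) * (E * G) := by
          have : star G * G - star (E * G) * (E * G) = star G * (1 - E) * G := by
            rw [star_mul, hEsa]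
            calc star G * G - (star G * E) * (E * G)
                = star G * G - star G * (E * E) * G := by rw [mul_assoc, mul_assoc, mul_assoc]
              _ = star G * G - star G * E * G := by rw [hE2]
              _ = star G * (1 - E) * G := by noncomm_ring
          rw [this]
          exact star_left_conjugate_nonneg (by rwa [← sub_nonneg] at hE_le_one) G
        have h4 : star (E * G) * (E * G) = E + (E * R + star R * E + star R * R) := by
          rw [hEG, star_add, hEsa]
          calc (E + star R) * (E + R)
              = E * E + E * R + star R * E + star R * R := by noncomm_ring
            _ = E + (E * R + star R * E + star R * R) := by rw [hE2]; abel
        calc E - star G * G ≤ E - star (E * G) * (E * G) :=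
              sub_le_sub_left (sub_nonneg.mp h3) E
          _ = -(E * R + star R * E + star R * R) := by rw [h4]; abel
      have hnormle : ‖E - star G * G‖ ≤ 2 * ‖R‖ + ‖R‖ * ‖R‖ := by
        calc ‖E - star G * G‖ ≤ ‖-(E * R + star R * E + star R * R)‖ :=
              CStarAlgebra.norm_le_norm_of_nonneg_of_le hpos hle
          _ = ‖E * R + star R * E + star R * R‖ := norm_neg _
          _ ≤ ‖E * R‖ + ‖star R * E‖ + ‖star R * R‖ := norm_add₃_le
          _ ≤ ‖E‖ * ‖R‖ + ‖star R‖ * ‖E‖ + ‖star R‖ * ‖R‖ := by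
              gcongr <;> exact norm_mul_le _ _
          _ ≤ 2 * ‖R‖ + ‖R‖ * ‖R‖ := by
              rw [norm_star]
              nlinarith [norm_nonneg R, norm_nonneg E]
      -- expansion of the square
      have hexp : star (G - E) * (G - E) = (star G * G - E) - star R - R := by
        have hsGE : star G * E = E + star R := by
          have : star (E * G) = star G * E := by rw [star_mul, hEsa]
          rw [← this, hEG, star_add, hEsa]
        calc star (G - E) * (G - E)
            = star G * G - star G * E - (E * G) + E * E := by
              rw [star_sub, hEsa]; noncomm_ring
          _ = star G * G - (E + star R) - (E + R) + E := by rw [hsGE, hEG, hE2]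
          _ = (star G * G - E) - star R - R := by abel
      have hsq : ‖g i - e‖ ^ 2 = ‖(star G * G - E) - star R - R‖ := by
        have hGEsub : G - E = ((g i - e : A) : Unitization ℂ A) := by
          rw [Unitization.inr_sub, ← hGdef, ← hEdef]
        calc ‖g i - e‖ ^ 2 = ‖G - E‖ ^ 2 := by rw [hGEsub, Unitization.norm_inr]
          _ = ‖star (G - E) * (G - E)‖ := by
              rw [CStarRing.norm_star_mul_self, sq]
          _ = ‖(star G * G - E) - star R - R‖ := by rw [hexp]
      calc ‖g i - e‖ ^ 2 = ‖(star G * G - E) - star R - R‖ := hsq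
        _ ≤ ‖star G * G - E‖ + ‖star R‖ + ‖R‖ := by
            calc ‖(star G * G - E) - star R - R‖
                ≤ ‖(star G * G - E) - star R‖ + ‖R‖ := norm_sub_le _ _
              _ ≤ ‖star G * G - E‖ + ‖star R‖ + ‖R‖ := by
                  gcongr; exact norm_sub_le _ _
        _ = ‖E - star G * G‖ + 2 * ‖R‖ := by rw [norm_star, norm_sub_rev]; ring
        _ ≤ (2 * ‖R‖ + ‖R‖ * ‖R‖) + 2 * ‖R‖ := by linarith [hnormle]
        _ = 4 * ‖e * g i - e‖ + ‖e * g i - e‖ ^ 2 := by rw [hnR]; ring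
    -- squeeze
    have hlim : Tendsto (fun i => 4 * ‖e * g i - e‖ + ‖e * g i - e‖ ^ 2) atTop (𝓝 0) := by
      have h1 := hr.const_mul 4
      have h2 := hr.pow 2
      simpa using h1.add h2
    have hsq0 : Tendsto (fun i => ‖g i - e‖ ^ 2) atTop (𝓝 0) :=
      squeeze_zero (fun i => by positivity) key hlim
    have := hsq0.sqrt
    rw [Real.sqrt_zero] at this
    exact this.congr fun i => Real.sqrt_sq (norm_nonneg _)
end

section
/- Let A be a norm-closed subalgebra of a C*-algebra, let (e_i)_{i ∈ ι} be a net in A indexed by a nonempty directed set ι with ‖e_i‖ ≤ 1 for all i and ‖a * e_i − a‖ → 0 for every a ∈ A (a right contractive approximate identity), and suppose A possesses a right identity, i.e. some f ∈ A with a * f = a for all a ∈ A. Then the net (e_i) converges in norm to an element e ∈ A with ‖e‖ ≤ 1 (and ‖e‖ = 1 if A ≠ {0}) such that a * e = a for all a ∈ A; in particular A has a right identity of norm 1. -/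
open Filter Topology

private lemma key_step {U : Type*} [CStarAlgebra U] [PartialOrder U] [StarOrderedRing U]
    {a c : U} {δ : ℝ} (ha : ‖a‖ ≤ 1) (hc : ‖c‖ ≤ 1) (hca : ‖c * a - c‖ ≤ δ) :
    ‖c - c * star a‖ ≤ 2 * Real.sqrt (2 * δ) + δ := by
  have hδ0 : 0 ≤ δ := le_trans (norm_nonneg _) hca
  set x : U := a + star a with hxdef
  have hxsa : IsSelfAdjoint x := IsSelfAdjoint.add_star_self a
  have hxnorm : ‖x‖ ≤ 2 := by
    calc ‖x‖ ≤ ‖a‖ + ‖star a‖ := norm_add_le _ _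
    _ ≤ 2 := by rw [norm_star]; linarith
  set h : U := 2 - x with hhdef
  have hh0 : 0 ≤ h := by
    have h1 : x ≤ algebraMap ℝ U ‖x‖ := hxsa.le_algebraMap_norm_self
    have h2 : algebraMap ℝ U ‖x‖ ≤ (2 : U) := by
      have e1 : (2 : U) - algebraMap ℝ U ‖x‖ = algebraMap ℝ U (2 - ‖x‖) := by
        simp [map_sub, map_ofNat]
      have e2 : algebraMap ℝ U (2 - ‖x‖) =
          star (algebraMap ℝ U (Real.sqrt (2 - ‖x‖))) * algebraMap ℝ U (Real.sqrt (2 - ‖x‖)) := by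
        rw [← algebraMap_star_comm, star_trivial, ← map_mul,
          Real.mul_self_sqrt (by linarith)]
      rw [← sub_nonneg, e1, e2]
      exact star_mul_self_nonneg _
    rw [hhdef, sub_nonneg]
    exact h1.trans h2
  have hhnorm : ‖h‖ ≤ 4 := by
    have h1 : ‖(1:U)‖ * ‖(1:U)‖ = ‖(1:U)‖ := by
      have := CStarRing.norm_self_mul_star (x := (1:U))
      simpa using this.symm
    have h2 : ‖(1:U)‖ ≤ 1 := by nlinarith [norm_nonneg (1:U)]
    have h3 : ‖(2:U)‖ ≤ 2 := by
      calc ‖(2:U)‖ = ‖(1:U)+1‖ := by norm_num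
      _ ≤ ‖(1:U)‖ + ‖(1:U)‖ := norm_add_le _ _
      _ ≤ 2 := by linarith
    calc ‖h‖ ≤ ‖(2:U)‖ + ‖x‖ := norm_sub_le _ _
    _ ≤ 4 := by linarith
  set s : U := CFC.sqrt h with hsdef
  have hs0 : 0 ≤ s := CFC.sqrt_nonneg h
  have hssa : IsSelfAdjoint s := IsSelfAdjoint.of_nonneg hs0
  have hss : s * s = h := CFC.sqrt_mul_sqrt_self h hh0
  have hid1 : c * h * star c = (c - c * a) * star c + star ((c - c * a) * star c) := by
    simp only [hhdef, hxdef, star_mul, star_sub, star_star]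
    noncomm_ring
  have hkey1 : ‖c * h * star c‖ ≤ 2 * δ := by
    rw [hid1]
    have hy : ‖(c - c * a) * star c‖ ≤ δ := by
      calc ‖(c - c * a) * star c‖ ≤ ‖c - c * a‖ * ‖star c‖ := norm_mul_le _ _
      _ ≤ δ * 1 := by
          apply mul_le_mul _ (by rwa [norm_star]) (norm_nonneg _) hδ0
          rwa [norm_sub_rev] at hca
      _ = δ := mul_one δ
    calc ‖(c - c * a) * star c + star ((c - c * a) * star c)‖
        ≤ ‖(c - c * a) * star c‖ + ‖star ((c - c * a) * star c)‖ := norm_add_le _ _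
    _ = ‖(c - c * a) * star c‖ + ‖(c - c * a) * star c‖ := by rw [norm_star]
    _ ≤ 2 * δ := by linarith
  have hcs : ‖c * s‖ ≤ Real.sqrt (2 * δ) := by
    have hsq : ‖c * s‖ * ‖c * s‖ ≤ 2 * δ := by
      have hcc : (c * s) * star (c * s) = c * h * star c := by
        rw [star_mul, hssa.star_eq, ← mul_assoc, mul_assoc c s s, hss]
      calc ‖c * s‖ * ‖c * s‖ = ‖(c * s) * star (c * s)‖ :=
            (CStarRing.norm_self_mul_star).symm
      _ = ‖c * h * star c‖ := by rw [hcc]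
      _ ≤ 2 * δ := hkey1
    nlinarith [norm_nonneg (c * s), Real.sq_sqrt (by linarith : (0:ℝ) ≤ 2*δ),
      Real.sqrt_nonneg (2*δ), sq_nonneg (‖c * s‖ - Real.sqrt (2*δ))]
  have hsnorm : ‖s‖ ≤ 2 := by
    have hs : ‖s‖ * ‖s‖ = ‖h‖ := by
      calc ‖s‖ * ‖s‖ = ‖s * star s‖ := (CStarRing.norm_self_mul_star).symm
      _ = ‖h‖ := by rw [hssa.star_eq, hss]
    nlinarith [norm_nonneg s]
  have hch : ‖c * h‖ ≤ 2 * Real.sqrt (2 * δ) := by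
    calc ‖c * h‖ = ‖(c * s) * s‖ := by rw [mul_assoc, hss]
    _ ≤ ‖c * s‖ * ‖s‖ := norm_mul_le _ _
    _ ≤ Real.sqrt (2*δ) * 2 := by
        apply mul_le_mul hcs hsnorm (norm_nonneg _) (Real.sqrt_nonneg _)
    _ = 2 * Real.sqrt (2 * δ) := by ring
  have hid2 : c - c * star a = c * h - (c - c * a) := by
    simp only [hhdef, hxdef]
    noncomm_ring
  calc ‖c - c * star a‖ = ‖c * h - (c - c * a)‖ := by rw [hid2]
  _ ≤ ‖c * h‖ + ‖c - c * a‖ := norm_sub_le _ _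
  _ ≤ 2 * Real.sqrt (2 * δ) + δ := by
      rw [norm_sub_rev] at hca; linarith

private lemma close_step {U : Type*} [CStarAlgebra U] [PartialOrder U] [StarOrderedRing U]
    {a b : U} {ε : ℝ} (ha : ‖a‖ ≤ 1) (hb : ‖b‖ ≤ 1)
    (h1 : ‖a * b - a‖ ≤ ε) (h2 : ‖b * a - b‖ ≤ ε) (h4 : ‖b * b - b‖ ≤ ε) :
    ‖a - b‖ ≤ 8 * Real.sqrt (2 * ε) + 4 * ε := by
  set K : ℝ := 2 * Real.sqrt (2 * ε) + ε with hK
  have i1 : ‖b - b * star a‖ ≤ K := key_step ha hb h2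
  have i3 : ‖a - a * star b‖ ≤ K := key_step hb ha h1
  have i4 : ‖b - b * star b‖ ≤ K := key_step hb hb h4
  have hbst : ‖b - star b‖ ≤ 2 * K := by
    have e1 : b - star b = (b - b * star b) - star (b - b * star b) := by
      simp only [star_sub, star_mul, star_star]
      noncomm_ring
    calc ‖b - star b‖ = ‖(b - b * star b) - star (b - b * star b)‖ := by rw [← e1]
    _ ≤ ‖b - b * star b‖ + ‖star (b - b * star b)‖ := norm_sub_le _ _
    _ = ‖b - b * star b‖ + ‖b - b * star b‖ := by rw [norm_star]
    _ ≤ 2 * K := by linarith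
  have hab : ‖a * star b - star b‖ ≤ K := by
    have e2 : a * star b - star b = star (b * star a - b) := by
      simp only [star_sub, star_mul, star_star]
    rw [e2, norm_star, norm_sub_rev]
    exact i1
  calc ‖a - b‖ = ‖(a - a * star b) + ((a * star b - star b) + (star b - b))‖ := by
        congr 1; abel
  _ ≤ ‖a - a * star b‖ + ‖(a * star b - star b) + (star b - b)‖ := norm_add_le _ _
  _ ≤ ‖a - a * star b‖ + (‖a * star b - star b‖ + ‖star b - b‖) := by
        gcongr; exact norm_add_le _ _
  _ ≤ K + (K + 2 * K) := by
        rw [norm_sub_rev] at hbst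
        gcongr
  _ = 8 * Real.sqrt (2 * ε) + 4 * ε := by rw [hK]; ring

theorem operator_algebra_rcai_converges_to_right_identity
    {C : Type*} [NonUnitalCStarAlgebra C]
    (A : NonUnitalSubalgebra ℂ C) (hA : IsClosed (A : Set C))
    {ι : Type*} [Preorder ι] [Nonempty ι] [IsDirected ι (· ≤ ·)]
    (e : ι → C) (heA : ∀ i, e i ∈ A) (hen : ∀ i, ‖e i‖ ≤ 1)
    (hrcai : ∀ a ∈ A, Tendsto (fun i => ‖a * e i - a‖) atTop (𝓝 0))
    (f : C) (hf : f ∈ A) (hfr : ∀ a ∈ A, a * f = a) :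
    ∃ g ∈ A, Tendsto (fun i => ‖e i - g‖) atTop (𝓝 0) ∧ ‖g‖ ≤ 1 ∧
      ((A : Set C) ≠ {0} → ‖g‖ = 1) ∧ ∀ a ∈ A, a * g = a := by
  haveI : (atTop : Filter ι).NeBot := atTop_neBot_iff.mpr ⟨‹_›, ‹_›⟩
  letI : PartialOrder (Unitization ℂ C) := CStarAlgebra.spectralOrder _
  letI : StarOrderedRing (Unitization ℂ C) := CStarAlgebra.spectralOrderedRing _
  set εf : ι → ℝ := fun i => ‖f * e i - f‖ with hεf
  have hεt : Tendsto εf atTop (𝓝 0) := hrcai f hf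
  have master : ∀ i j, ‖e i * e j - e i‖ ≤ εf j := by
    intro i j
    have hef : e i * f = e i := hfr _ (heA i)
    have : e i * e j - e i = e i * (f * e j - f) := by
      rw [mul_sub, ← mul_assoc, hef]
    rw [this]
    calc ‖e i * (f * e j - f)‖ ≤ ‖e i‖ * ‖f * e j - f‖ := norm_mul_le _ _
    _ ≤ 1 * εf j := by
        apply mul_le_mul (hen i) le_rfl (norm_nonneg _) zero_le_one
    _ = εf j := one_mul _
  -- Cauchy
  have hcauchy : Cauchy (Filter.map e atTop) := by
    rw [Metric.cauchy_iff]
    refine ⟨Filter.map_neBot, fun δ hδ => ?_⟩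
    set δ' : ℝ := min ((δ/32)^2) (δ/16) with hδ'def
    have hδ'pos : 0 < δ' := lt_min (by positivity) (by positivity)
    have hev : ∀ᶠ i in atTop, εf i < δ' :=
      hεt.eventually_lt_const hδ'pos
    obtain ⟨N, hN⟩ := Filter.mem_atTop_sets.mp hev
    refine ⟨e '' {i | N ≤ i}, Filter.image_mem_map (Filter.mem_atTop N), ?_⟩
    rintro x ⟨i, hi, rfl⟩ y ⟨j, hj, rfl⟩
    have hbound : ‖e i - e j‖ ≤ 8 * Real.sqrt (2 * δ') + 4 * δ' := by
      have hij : ‖e i * e j - e i‖ ≤ δ' := (master i j).trans (hN j hj).le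
      have hji : ‖e j * e i - e j‖ ≤ δ' := (master j i).trans (hN i hi).le
      have hjj : ‖e j * e j - e j‖ ≤ δ' := (master j j).trans (hN j hj).le
      have key := close_step (U := Unitization ℂ C) (ε := δ')
        (a := (e i : Unitization ℂ C)) (b := (e j : Unitization ℂ C))
        (by rw [Unitization.norm_inr]; exact hen i)
        (by rw [Unitization.norm_inr]; exact hen j)
        (by rw [← Unitization.inr_mul, ← Unitization.inr_sub, Unitization.norm_inr]; exact hij)
        (by rw [← Unitization.inr_mul, ← Unitization.inr_sub, Unitization.norm_inr]; exact hji)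
        (by rw [← Unitization.inr_mul, ← Unitization.inr_sub, Unitization.norm_inr]; exact hjj)
      rwa [← Unitization.inr_sub, Unitization.norm_inr] at key
    have harith : 8 * Real.sqrt (2 * δ') + 4 * δ' < δ := by
      set s : ℝ := Real.sqrt (2 * δ') with hs
      have hs0 : 0 ≤ s := Real.sqrt_nonneg _
      have hs2 : s ^ 2 = 2 * δ' := Real.sq_sqrt (by linarith)
      have hd1 : δ' ≤ (δ/32)^2 := min_le_left _ _
      have hd2 : δ' ≤ δ/16 := min_le_right _ _
      nlinarith [sq_nonneg (s - δ/16), sq_nonneg s]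
    rw [dist_eq_norm]
    exact lt_of_le_of_lt hbound harith
  obtain ⟨g, hg'⟩ := CompleteSpace.complete hcauchy
  have hg : Tendsto e atTop (𝓝 g) := hg'
  have hgA : g ∈ A := hA.mem_of_tendsto hg (Filter.Eventually.of_forall heA)
  have htn : Tendsto (fun i => ‖e i - g‖) atTop (𝓝 0) :=
    (tendsto_iff_norm_sub_tendsto_zero).mp hg
  have hgnorm : ‖g‖ ≤ 1 := by
    have : Tendsto (fun i => ‖e i‖) atTop (𝓝 ‖g‖) := hg.norm
    exact le_of_tendsto this (Filter.Eventually.of_forall hen)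
  have hgright : ∀ a ∈ A, a * g = a := by
    intro a haA
    have h1 : Tendsto (fun i => a * e i) atTop (𝓝 (a * g)) := hg.const_mul a
    have h2 : Tendsto (fun i => a * e i) atTop (𝓝 a) :=
      (tendsto_iff_norm_sub_tendsto_zero).mpr (hrcai a haA)
    exact tendsto_nhds_unique h1 h2
  refine ⟨g, hgA, htn, hgnorm, ?_, hgright⟩
  intro hne
  obtain ⟨a, haA, hane⟩ : ∃ a ∈ A, a ≠ 0 := by
    by_contra hcon
    push_neg at hcon
    apply hne
    ext x
    simp only [Set.mem_singleton_iff]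
    exact ⟨fun hx => hcon x hx, fun hx => hx ▸ A.zero_mem⟩
  have h1 : ‖a‖ ≤ ‖a‖ * ‖g‖ := by
    conv_lhs => rw [← hgright a haA]
    exact norm_mul_le _ _
  have h2 : 0 < ‖a‖ := norm_pos_iff.mpr hane
  have : 1 ≤ ‖g‖ := by
    by_contra hlt
    push_neg at hlt
    nlinarith
  exact le_antisymm hgnorm this
end

section
/- Let A be a unital C*-algebra, let a ∈ A, and let (e_i)_{i ∈ ι} be a net in A indexed by a nonempty directed set ι with ‖e_i‖ ≤ 1 for all i, such that ‖a * e_i − a‖ → 0 along atTop. Then also ‖a * e_i * e_i* − a‖ → 0, ‖a * e_i* − a‖ → 0, and ‖a * e_i* * e_i − a‖ → 0 along atTop. -/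
open Filter Topology

lemma rcai_aux_bound {A : Type*} [CStarAlgebra A] (a x : A) (hx : ‖x‖ ≤ 1) :
    ‖a * (x * star x) - a‖ ≤ Real.sqrt (2 * ‖a‖ * ‖a * x - a‖) := by
  letI := CStarAlgebra.spectralOrder A
  haveI := CStarAlgebra.spectralOrderedRing A
  have hxx : (0:A) ≤ x * star x := mul_star_self_nonneg x
  have hle : x * star x ≤ 1 := by
    rw [← CStarAlgebra.norm_le_one_iff_of_nonneg _ hxx, CStarRing.norm_self_mul_star]
    nlinarith [norm_nonneg x]
  have hpos : (0:A) ≤ 1 - x * star x := sub_nonneg.mpr hle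
  set f := CFC.sqrt (1 - x * star x) with hf
  have hf0 : (0:A) ≤ f := CFC.sqrt_nonneg _
  have hff : f * f = 1 - x * star x := CFC.sqrt_mul_sqrt_self _ hpos
  have hfsa : star f = f := (IsSelfAdjoint.of_nonneg hf0).star_eq
  have hfn : ‖f‖ ≤ 1 := by
    have h1 : ‖f‖ * ‖f‖ = ‖1 - x * star x‖ := by
      rw [← hff, ← CStarRing.norm_self_mul_star (x := f), hfsa]
    have h2 : ‖(1 : A) - x * star x‖ ≤ 1 := by
      rw [CStarAlgebra.norm_le_one_iff_of_nonneg _ hpos]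
      simp [hxx]
    nlinarith [norm_nonneg f]
  have key : ‖a * (x * star x) - a‖ = ‖a * f * f‖ := by
    rw [mul_assoc, hff, mul_sub, mul_one, ← norm_neg]
    congr 1
    noncomm_ring
  have h2 : ‖a * f * f‖ ≤ ‖a * f‖ := by
    calc ‖a * f * f‖ ≤ ‖a * f‖ * ‖f‖ := norm_mul_le _ _
    _ ≤ ‖a * f‖ := by nlinarith [norm_nonneg (a * f)]
  have h3 : ‖a * f‖ * ‖a * f‖ = ‖a * (1 - x * star x) * star a‖ := by
    rw [← CStarRing.norm_self_mul_star (x := a * f), star_mul, hfsa, ← mul_assoc,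
      mul_assoc a f f, hff]
  have h4 : ‖a * (1 - x * star x) * star a‖ ≤ 2 * ‖a‖ * ‖a * x - a‖ := by
    have heq : a * (1 - x * star x) * star a
        = (a - a * x) * star a + (a * x) * star (a - a * x) := by
      simp only [star_sub, star_mul]
      noncomm_ring
    calc ‖a * (1 - x * star x) * star a‖
        ≤ ‖(a - a * x) * star a‖ + ‖(a * x) * star (a - a * x)‖ := by
          rw [heq]; exact norm_add_le _ _
      _ ≤ ‖a - a * x‖ * ‖a‖ + ‖a * x‖ * ‖a - a * x‖ := by
          refine add_le_add ?_ ?_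
          · exact (norm_mul_le _ _).trans_eq (by rw [norm_star])
          · exact (norm_mul_le _ _).trans_eq (by rw [norm_star])
      _ ≤ 2 * ‖a‖ * ‖a * x - a‖ := by
          rw [norm_sub_rev]
          have hax : ‖a * x‖ ≤ ‖a‖ := by
            calc ‖a * x‖ ≤ ‖a‖ * ‖x‖ := norm_mul_le _ _
            _ ≤ ‖a‖ := by nlinarith [norm_nonneg a]
          nlinarith [norm_nonneg (a * x - a), norm_nonneg a]
  calc ‖a * (x * star x) - a‖ ≤ ‖a * f‖ := key ▸ h2
    _ = Real.sqrt (‖a * f‖ * ‖a * f‖) := (Real.sqrt_mul_self (norm_nonneg _)).symm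
    _ ≤ Real.sqrt (2 * ‖a‖ * ‖a * x - a‖) := Real.sqrt_le_sqrt (h3 ▸ h4)

theorem rcai_adjoint_limits
    {A : Type*} [CStarAlgebra A] (a : A)
    {ι : Type*} [Preorder ι] [Nonempty ι] [IsDirected ι (· ≤ ·)]
    (e : ι → A) (hen : ∀ i, ‖e i‖ ≤ 1)
    (h : Tendsto (fun i => ‖a * e i - a‖) atTop (𝓝 0)) :
    Tendsto (fun i => ‖a * (e i * star (e i)) - a‖) atTop (𝓝 0) ∧
    Tendsto (fun i => ‖a * star (e i) - a‖) atTop (𝓝 0) ∧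
    Tendsto (fun i => ‖a * (star (e i) * e i) - a‖) atTop (𝓝 0) := by
  have key : Tendsto (fun i => ‖a * (e i * star (e i)) - a‖) atTop (𝓝 0) := by
    have hg : Tendsto (fun i => Real.sqrt (2 * ‖a‖ * ‖a * e i - a‖)) atTop (𝓝 0) := by
      have h1 : Tendsto (fun i => 2 * ‖a‖ * ‖a * e i - a‖) atTop (𝓝 0) := by
        simpa using h.const_mul (2 * ‖a‖)
      simpa only [Function.comp_def, Real.sqrt_zero] using (Real.continuous_sqrt.tendsto 0).comp h1
    exact squeeze_zero (fun i => norm_nonneg _)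
      (fun i => rcai_aux_bound a (e i) (hen i)) hg
  have h2 : Tendsto (fun i => ‖a * star (e i) - a‖) atTop (𝓝 0) := by
    refine squeeze_zero (fun i => norm_nonneg _)
      (fun i => ?_) (by simpa using key.add h)
    have heq : a * star (e i) - a
        = (a * (e i * star (e i)) - a) - (a * e i - a) * star (e i) := by
      noncomm_ring
    calc ‖a * star (e i) - a‖
        ≤ ‖a * (e i * star (e i)) - a‖ + ‖(a * e i - a) * star (e i)‖ := by
          rw [heq]; exact norm_sub_le _ _
      _ ≤ ‖a * (e i * star (e i)) - a‖ + ‖a * e i - a‖ := by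
          gcongr
          calc ‖(a * e i - a) * star (e i)‖ ≤ ‖a * e i - a‖ * ‖star (e i)‖ := norm_mul_le _ _
          _ ≤ ‖a * e i - a‖ := by
              rw [norm_star]
              nlinarith [norm_nonneg (a * e i - a), hen i, norm_nonneg (e i)]
  refine ⟨key, h2, ?_⟩
  refine squeeze_zero (fun i => norm_nonneg _) (fun i => ?_) (by simpa using h2.add h)
  have heq : a * (star (e i) * e i) - a = (a * star (e i) - a) * e i + (a * e i - a) := by
    noncomm_ring
  calc ‖a * (star (e i) * e i) - a‖
      ≤ ‖(a * star (e i) - a) * e i‖ + ‖a * e i - a‖ := by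
        rw [heq]; exact norm_add_le _ _
    _ ≤ ‖a * star (e i) - a‖ + ‖a * e i - a‖ := by
        gcongr
        calc ‖(a * star (e i) - a) * e i‖ ≤ ‖a * star (e i) - a‖ * ‖e i‖ := norm_mul_le _ _
        _ ≤ ‖a * star (e i) - a‖ := by
            nlinarith [norm_nonneg (a * star (e i) - a), hen i, norm_nonneg (e i)]
end

section
/- Let J be a closed left ideal of a C*-algebra A and let (e_i)_{i ∈ ι} be a right contractive approximate identity for J (a net in J, ‖e_i‖ ≤ 1, with ‖x * e_i − x‖ → 0 for every x ∈ J). Then the net (e_i* * e_i) is a right contractive approximate identity for J consisting of nonnegative elements: 0 ≤ e_i* * e_i, ‖e_i* * e_i‖ ≤ 1, e_i* * e_i ∈ J, and ‖x * (e_i* * e_i) − x‖ → 0 for every x ∈ J. Moreover, for every y ∈ J with y* ∈ J, both ‖y * (e_i* * e_i) − y‖ → 0 and ‖(e_i* * e_i) * y − y‖ → 0 (so (e_i* * e_i) is a two-sided contractive approximate identity for the C*-subalgebra J ∩ J*). -/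
open Filter Topology

open Unitization in
private lemma key_bound {A : Type*} [NonUnitalCStarAlgebra A] [PartialOrder A]
    [StarOrderedRing A] (x e : A) (he : ‖e‖ ≤ 1) :
    ‖x * (star e * e) - x‖ ^ 4 ≤ 2 * (‖star x * x‖ * ‖(star x * x) * e - star x * x‖) := by
  set B := Unitization ℂ A
  set X : B := (x : B) with hX
  set E : B := (e : B) with hE
  set Z : B := star X * X with hZdef
  set u : B := 1 - star E * E with hu
  have hEn : ‖E‖ ≤ 1 := by rwa [hE, Unitization.norm_inr]
  have hF0 : (0 : B) ≤ star E * E := star_mul_self_nonneg E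
  have hFn : ‖star E * E‖ ≤ 1 := by
    rw [CStarRing.norm_star_mul_self]
    calc ‖E‖ * ‖E‖ ≤ 1 * 1 := mul_le_mul hEn hEn (norm_nonneg _) zero_le_one
      _ = 1 := one_mul 1
  have hF1 : star E * E ≤ 1 := (CStarAlgebra.norm_le_one_iff_of_nonneg _ hF0).mp hFn
  have hu0 : (0 : B) ≤ u := sub_nonneg.mpr hF1
  have hu1 : u ≤ 1 := by
    rw [hu]
    exact sub_le_self 1 hF0
  have hustar : star u = u := by
    rw [hu]
    simp [star_mul]
  have hun : ‖u‖ ≤ 1 := (CStarAlgebra.norm_le_one_iff_of_nonneg u hu0).mpr hu1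
  have hZstar : star Z = Z := by rw [hZdef]; simp [star_mul]
  -- the three conjugates
  have hZsa : IsSelfAdjoint Z := hZstar
  -- step A : ‖x * (star e * e) - x‖ = ‖X * u‖
  have hXu : X * u = -(X * (star E * E) - X) := by
    rw [hu, mul_sub, mul_one, neg_sub]
  have hA : ‖x * (star e * e) - x‖ = ‖X * u‖ := by
    rw [hXu, norm_neg, hX, hE, ← Unitization.inr_star, ← Unitization.inr_mul,
      ← Unitization.inr_mul, ← Unitization.inr_sub, Unitization.norm_inr]
  -- step B : ‖X * u‖ ^ 2 = ‖u * Z * u‖ ≤ ‖Z * u‖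
  have hB : ‖X * u‖ ^ 2 = ‖u * Z * u‖ := by
    rw [sq, ← CStarRing.norm_star_mul_self (x := X * u), star_mul, hustar, hZdef]
    congr 1
    noncomm_ring
  have hC : ‖u * Z * u‖ ≤ ‖Z * u‖ := by
    calc ‖u * Z * u‖ = ‖u * (Z * u)‖ := by rw [mul_assoc]
      _ ≤ ‖u‖ * ‖Z * u‖ := norm_mul_le _ _
      _ ≤ 1 * ‖Z * u‖ := by
          exact mul_le_mul_of_nonneg_right hun (norm_nonneg _)
      _ = ‖Z * u‖ := one_mul _
  -- step D : ‖Z * u‖ ^ 2 = ‖Z * (u * u) * Z‖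
  have hD : ‖Z * u‖ ^ 2 = ‖Z * (u * u) * Z‖ := by
    rw [sq, ← CStarRing.norm_self_mul_star (x := Z * u), star_mul, hustar, hZstar]
    congr 1
    noncomm_ring
  -- step E : Z * (u * u) * Z ≤ Z * u * Z in norm
  have huu : u * u ≤ u := by
    have := CStarAlgebra.pow_antitone hu0 hu1 (one_le_two (α := ℕ))
    simpa [pow_one, sq] using this
  have hconj : Z * (u * u) * Z ≤ Z * u * Z := by
    have := star_left_conjugate_le_conjugate huu Z
    rwa [hZstar] at this
  have hZuuZ_nonneg : (0 : B) ≤ Z * (u * u) * Z := by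
    have : Z * (u * u) * Z = star (u * Z) * (u * Z) := by
      rw [star_mul, hustar, hZstar]
      noncomm_ring
    rw [this]
    exact star_mul_self_nonneg _
  have hEnorm : ‖Z * (u * u) * Z‖ ≤ ‖Z * u * Z‖ :=
    CStarAlgebra.norm_le_norm_of_nonneg_of_le hZuuZ_nonneg hconj
  -- step F : Z * u * Z ≤ Z * (1 - E) * Z + Z * (1 - star E) * Z
  have hle : u ≤ (1 - E) + (1 - star E) := by
    have h0 : (0 : B) ≤ star (1 - E) * (1 - E) := star_mul_self_nonneg _
    have hexp : star (1 - E) * (1 - E) = ((1 - E) + (1 - star E)) - u := by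
      rw [hu]
      simp only [star_sub, star_one]
      simp only [sub_mul, one_mul, mul_sub, mul_one]
      abel
    rw [hexp] at h0
    rw [← sub_nonneg]
    exact h0
  have hF : Z * u * Z ≤ Z * ((1 - E) + (1 - star E)) * Z := by
    have := star_left_conjugate_le_conjugate hle Z
    rwa [hZstar] at this
  have hZuZ_nonneg : (0 : B) ≤ Z * u * Z := by
    have := star_left_conjugate_nonneg hu0 Z
    rwa [hZstar] at this
  have hFnorm : ‖Z * u * Z‖ ≤ ‖Z * ((1 - E) + (1 - star E)) * Z‖ :=
    CStarAlgebra.norm_le_norm_of_nonneg_of_le hZuZ_nonneg hF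
  -- step G : split and bound by 2 * ‖z‖ * ‖z * e - z‖
  have hsplit : Z * ((1 - E) + (1 - star E)) * Z
      = Z * (1 - E) * Z + Z * (1 - star E) * Z := by noncomm_ring
  have hstar_eq : ‖Z * (1 - star E) * Z‖ = ‖Z * (1 - E) * Z‖ := by
    rw [← norm_star (Z * (1 - E) * Z)]
    congr 1
    simp only [star_mul, star_sub, star_one, hZstar]
    noncomm_ring
  have hZE : ‖Z * (1 - E) * Z‖ ≤ ‖(star x * x) * e - star x * x‖ * ‖star x * x‖ := by
    have h1 : Z * (1 - E) = -(Z * E - Z) := by rw [mul_sub, mul_one, neg_sub]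
    calc ‖Z * (1 - E) * Z‖ ≤ ‖Z * (1 - E)‖ * ‖Z‖ := norm_mul_le _ _
      _ = ‖(star x * x) * e - star x * x‖ * ‖star x * x‖ := by
          rw [h1, norm_neg]
          congr 1
          · rw [hZdef, hX, hE, ← Unitization.inr_star, ← Unitization.inr_mul,
              ← Unitization.inr_mul, ← Unitization.inr_sub, Unitization.norm_inr]
          · rw [hZdef, hX, ← Unitization.inr_star, ← Unitization.inr_mul,
              Unitization.norm_inr]
  have hG : ‖Z * ((1 - E) + (1 - star E)) * Z‖
      ≤ 2 * (‖star x * x‖ * ‖(star x * x) * e - star x * x‖) := by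
    calc ‖Z * ((1 - E) + (1 - star E)) * Z‖
        = ‖Z * (1 - E) * Z + Z * (1 - star E) * Z‖ := by rw [hsplit]
      _ ≤ ‖Z * (1 - E) * Z‖ + ‖Z * (1 - star E) * Z‖ := norm_add_le _ _
      _ = 2 * ‖Z * (1 - E) * Z‖ := by rw [hstar_eq]; ring
      _ ≤ 2 * (‖(star x * x) * e - star x * x‖ * ‖star x * x‖) := by
          exact mul_le_mul_of_nonneg_left hZE (by norm_num)
      _ = 2 * (‖star x * x‖ * ‖(star x * x) * e - star x * x‖) := by ring
  -- combine
  have key1 : ‖x * (star e * e) - x‖ ^ 2 ≤ ‖Z * u‖ := by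
    rw [hA, hB]
    exact hC
  calc ‖x * (star e * e) - x‖ ^ 4 = (‖x * (star e * e) - x‖ ^ 2) ^ 2 := by ring
    _ ≤ ‖Z * u‖ ^ 2 := by
        exact pow_le_pow_left₀ (by positivity) key1 2
    _ = ‖Z * (u * u) * Z‖ := hD
    _ ≤ ‖Z * u * Z‖ := hEnorm
    _ ≤ ‖Z * ((1 - E) + (1 - star E)) * Z‖ := hFnorm
    _ ≤ 2 * (‖star x * x‖ * ‖(star x * x) * e - star x * x‖) := hG

theorem star_rcai_is_positive_rcai
    {A : Type*} [NonUnitalCStarAlgebra A] [PartialOrder A] [StarOrderedRing A]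
    (J : Submodule ℂ A) (hJc : IsClosed (J : Set A)) (hJ : ∀ a : A, ∀ x ∈ J, a * x ∈ J)
    {ι : Type*} [Preorder ι] [Nonempty ι] [IsDirected ι (· ≤ ·)]
    (e : ι → A) (heJ : ∀ i, e i ∈ J) (hen : ∀ i, ‖e i‖ ≤ 1)
    (hrcai : ∀ x ∈ J, Tendsto (fun i => ‖x * e i - x‖) atTop (𝓝 0)) :
    (∀ i, 0 ≤ star (e i) * e i) ∧
    (∀ i, ‖star (e i) * e i‖ ≤ 1) ∧
    (∀ i, star (e i) * e i ∈ J) ∧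
    (∀ x ∈ J, Tendsto (fun i => ‖x * (star (e i) * e i) - x‖) atTop (𝓝 0)) ∧
    (∀ y ∈ J, star y ∈ J →
      Tendsto (fun i => ‖y * (star (e i) * e i) - y‖) atTop (𝓝 0) ∧
      Tendsto (fun i => ‖(star (e i) * e i) * y - y‖) atTop (𝓝 0)) := by
  have hpos : ∀ i, 0 ≤ star (e i) * e i := fun i => star_mul_self_nonneg (e i)
  have hnorm : ∀ i, ‖star (e i) * e i‖ ≤ 1 := by
    intro i
    rw [CStarRing.norm_star_mul_self]
    calc ‖e i‖ * ‖e i‖ ≤ 1 * 1 := mul_le_mul (hen i) (hen i) (norm_nonneg _) zero_le_one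
      _ = 1 := one_mul 1
  have hmem : ∀ i, star (e i) * e i ∈ J := fun i => hJ (star (e i)) (e i) (heJ i)
  have htendsto : ∀ x ∈ J, Tendsto (fun i => ‖x * (star (e i) * e i) - x‖) atTop (𝓝 0) := by
    intro x hx
    have hzJ : star x * x ∈ J := hJ (star x) x hx
    have hz := hrcai (star x * x) hzJ
    -- ‖x * (star e * e) - x‖ ^ 4 → 0
    have h4 : Tendsto (fun i => ‖x * (star (e i) * e i) - x‖ ^ 4) atTop (𝓝 0) := by
      have hub : Tendsto (fun i => 2 * (‖star x * x‖ * ‖(star x * x) * e i - star x * x‖))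
          atTop (𝓝 0) := by
        have := (hz.const_mul ‖star x * x‖).const_mul 2
        simpa using this
      refine squeeze_zero (fun i => by positivity) (fun i => key_bound x (e i) (hen i)) hub
    -- conclude
    have h1 : Tendsto (fun i => (‖x * (star (e i) * e i) - x‖ ^ 4) ^ ((1 : ℝ)/4)) atTop
        (𝓝 ((0 : ℝ) ^ ((1 : ℝ)/4))) := h4.rpow_const (Or.inr (by norm_num))
    have h0 : ((0 : ℝ)) ^ ((1 : ℝ)/4) = 0 := by
      rw [Real.zero_rpow (by norm_num)]
    rw [h0] at h1
    convert h1 using 2 with i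
    rw [← Real.rpow_natCast (‖x * (star (e i) * e i) - x‖) 4, ← Real.rpow_mul (norm_nonneg _)]
    norm_num
  refine ⟨hpos, hnorm, hmem, htendsto, ?_⟩
  intro y hy hy'
  refine ⟨htendsto y hy, ?_⟩
  have := htendsto (star y) hy'
  convert this using 2 with i
  rw [← norm_star]
  congr 1
  simp [star_sub, star_mul, mul_assoc]
end

section
/- Every closed left ideal J of a C*-algebra A admits a positive right contractive approximate identity: there exist a nonempty directed set ι and a net (e_i)_{i ∈ ι} of elements of J with 0 ≤ e_i and ‖e_i‖ ≤ 1 for all i, such that ‖x * e_i − x‖ → 0 along atTop for every x ∈ J. -/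
open Filter Topology

/-- A net in `α`: a function on a nonempty directed preordered index type. -/
structure DirectedNet.{w, u} (α : Type u) : Type (max u (w + 1)) where
  ι : Type w
  [pre : Preorder ι]
  [ne : Nonempty ι]
  dir : IsDirected ι (· ≤ ·)
  elem : ι → α

attribute [instance] DirectedNet.pre DirectedNet.ne

section Aux

open NNReal Unitization CStarAlgebra

variable {A : Type*} [NonUnitalCStarAlgebra A] [PartialOrder A] [StarOrderedRing A]

local notation "σₙ" => quasispectrum

open ContinuousMapZero in
lemma cfcnHom_mem_of_complex (J : Submodule ℂ A) (hJc : IsClosed (J : Set A))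
    (hJ : ∀ a : A, ∀ x ∈ J, a * x ∈ J) {a : A} (haJ : a ∈ J) (haJ' : star a ∈ J)
    (ha : IsStarNormal a) (f : C(σₙ ℂ a, ℂ)₀) : cfcₙHom (R := ℂ) ha f ∈ J := by
  have h0 : ((0 : σₙ ℂ a) : ℂ) = 0 := rfl
  have hid : cfcₙHom (R := ℂ) ha (ContinuousMapZero.id (σₙ ℂ a)) = a := cfcₙHom_id ha
  induction f using ContinuousMapZero.induction_on_of_compact with
  | zero => simp only [map_zero]; exact J.zero_mem
  | id => rw [hid]; exact haJ
  | star_id => rw [map_star, hid]; exact haJ'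
  | add f g hf hg => rw [map_add]; exact J.add_mem hf hg
  | mul f g hf hg => rw [map_mul]; exact hJ _ _ hg
  | smul r f hf => rw [map_smul]; exact J.smul_mem r hf
  | frequently f hf =>
    have hcont : Continuous (cfcₙHom (R := ℂ) ha) := (cfcₙHom_isClosedEmbedding ha).continuous
    have : cfcₙHom (R := ℂ) ha f ∈ closure (J : Set A) :=
      mem_closure_iff_frequently.mpr <| (hcont.tendsto f).frequently hf
    rwa [hJc.closure_eq] at this

lemma cfcn_complex_mem (J : Submodule ℂ A) (hJc : IsClosed (J : Set A))
    (hJ : ∀ a : A, ∀ x ∈ J, a * x ∈ J) {a : A} (haJ : a ∈ J) (haJ' : star a ∈ J)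
    (f : ℂ → ℂ) : cfcₙ f a ∈ J := by
  by_cases h : IsStarNormal a ∧ ContinuousOn f (σₙ ℂ a) ∧ f 0 = 0
  · rw [cfcₙ_apply f a h.2.1 h.2.2 h.1]
    exact cfcnHom_mem_of_complex J hJc hJ haJ haJ' h.1 _
  · rw [cfcₙ_apply_of_not_and_and a h]; exact J.zero_mem

lemma cfcn_nnreal_mem (J : Submodule ℂ A) (hJc : IsClosed (J : Set A))
    (hJ : ∀ a : A, ∀ x ∈ J, a * x ∈ J) {a : A} (haJ : a ∈ J) (ha : 0 ≤ a)
    (f : ℝ≥0 → ℝ≥0) : cfcₙ f a ∈ J := by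
  rw [cfcₙ_nnreal_eq_real f (a := a) ha, cfcₙ_real_eq_complex _ (IsSelfAdjoint.of_nonneg ha)]
  exact cfcn_complex_mem J hJc hJ haJ (by rwa [(IsSelfAdjoint.of_nonneg ha).star_eq]) _

set_option linter.style.multiGoal false in
lemma le_cfcn_aux (a b : A) (ha₁ : 0 ≤ a) (hb₁ : 0 ≤ b) (ha₂ : ‖a‖ < 1) :
    a ≤ cfcₙ (fun x : ℝ≥0 ↦ 1 - (1 + x)⁻¹)
      (cfcₙ (fun x : ℝ≥0 ↦ x * (1 - x)⁻¹) a + cfcₙ (fun x : ℝ≥0 ↦ x * (1 - x)⁻¹) b) := by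
  set f : ℝ≥0 → ℝ≥0 := fun x => 1 - (1 + x)⁻¹ with hf_def
  set g : ℝ≥0 → ℝ≥0 := fun x => x * (1 - x)⁻¹ with hg_def
  calc
    a = cfcₙ (f ∘ g) a := by
      conv_lhs => rw [← cfcₙ_id ℝ≥0 a]
      refine cfcₙ_congr (Set.InvOn.one_sub_one_add_inv.1.eqOn.symm.mono fun x hx ↦ ?_)
      exact lt_of_le_of_lt (le_nnnorm_of_mem_quasispectrum hx) ha₂
    _ = cfcₙ f (cfcₙ g a) := by
      rw [cfcₙ_comp f g a ?_ (by simp [f, tsub_self]) ?_ (by simp [g]) ha₁]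
      · fun_prop (disch := intro _ _; positivity)
      · have (x) (hx : x ∈ quasispectrum ℝ≥0 a) : 1 - x ≠ 0 := by
          refine tsub_pos_of_lt ?_ |>.ne'
          exact lt_of_le_of_lt (le_nnnorm_of_mem_quasispectrum hx) ha₂
        fun_prop (disch := assumption)
    _ ≤ cfcₙ f (cfcₙ g a + cfcₙ g b) := by
      have hab' : cfcₙ g a ≤ cfcₙ g a + cfcₙ g b := le_add_of_nonneg_right cfcₙ_nonneg_of_predicate
      exact CFC.monotoneOn_one_sub_one_add_inv cfcₙ_nonneg_of_predicate
        (cfcₙ_nonneg_of_predicate.trans hab') hab'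

lemma key_norm_bound {B : Type*} [CStarAlgebra B] [PartialOrder B] [StarOrderedRing B]
    (m : B) (hm₁ : 0 ≤ m) (hm₂ : ‖m‖ ≤ 1) (ε : ℝ≥0) (hε : 0 < ε) :
    ‖star m * (1 - cfc (fun y : ℝ≥0 ↦ 1 - (1 + y)⁻¹) (ε⁻¹ ^ 2 • m)) * m‖₊ ≤ ε ^ 2 := by
  set g : ℝ≥0 → ℝ≥0 := fun y ↦ 1 - (1 + y)⁻¹ with hg_def
  have hg : Continuous g := by
    rw [← continuousOn_univ]
    fun_prop (disch := intro _ _; positivity)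
  have hg' : ContinuousOn (fun y ↦ (1 + ε⁻¹ ^ 2 • y)⁻¹) (spectrum ℝ≥0 m) :=
    ContinuousOn.inv₀ (by fun_prop) fun _ _ ↦ by positivity
  suffices star m * (1 - cfc g (ε⁻¹ ^ 2 • m)) * m =
      cfc (fun y : ℝ≥0 ↦ y * (1 + ε⁻¹ ^ 2 • y)⁻¹ * y) m by
    rw [this]
    refine nnnorm_cfc_nnreal_le fun y hy ↦ ?_
    rw [show y * (1 + ε⁻¹ ^ 2 • y)⁻¹ * y = y * ε ^ 2 * y / (ε ^ 2 + y) by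
      rw [smul_eq_mul]; field_simp]
    calc
      y * ε ^ 2 * y / (ε ^ 2 + y) ≤ ε ^ 2 * 1 := by
        rw [mul_div_assoc]
        gcongr
        · refine mul_le_of_le_one_left zero_le ?_
          have hm' := hm₂
          rw [norm_le_one_iff_of_nonneg m hm₁, ← cfc_id' ℝ≥0 m, ← cfc_one (R := ℝ≥0) m,
            cfc_nnreal_le_iff _ _ _ (QuasispectrumRestricts.nnreal_of_nonneg hm₁)] at hm'
          exact hm' y hy
        · exact div_le_one (by positivity) |>.mpr le_add_self
      _ = ε ^ 2 := mul_one _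
  rw [cfc_mul (fun y : ℝ≥0 ↦ y * (1 + ε⁻¹ ^ 2 • y)⁻¹) (fun y ↦ y) m (continuousOn_id' _ |>.mul hg') (continuousOn_id' _),
    cfc_mul (fun y : ℝ≥0 ↦ y) (fun y ↦ (1 + ε⁻¹ ^ 2 • y)⁻¹) m (continuousOn_id' _) hg', cfc_id' .., hm₁.star_eq]
  congr
  rw [← cfc_one (R := ℝ≥0) m, ← cfc_comp_smul _ _ _ hg.continuousOn hm₁,
    ← cfc_tsub _ _ m (by simp [g]) hm₁ (by fun_prop) (Continuous.continuousOn <| by fun_prop)]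
  refine cfc_congr (fun y _ ↦ ?_)
  simp [g, tsub_tsub_cancel_of_le]

lemma sq_norm_mul_sub_le (x e : A) (he₀ : 0 ≤ e) (he₁ : ‖e‖ ≤ 1) :
    ‖x * e - x‖ ^ 2 ≤ ‖star x * x - e * (star x * x)‖ := by
  rw [← norm_inr (𝕜 := ℂ) (x * e - x), ← norm_inr (𝕜 := ℂ) (star x * x - e * (star x * x))]
  simp only [inr_sub, inr_mul, inr_star]
  set X : Unitization ℂ A := (x : Unitization ℂ A)
  set E : Unitization ℂ A := (e : Unitization ℂ A)
  have hE₀ : (0 : Unitization ℂ A) ≤ E := inr_nonneg_iff.mpr he₀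
  have hE : E ∈ Set.Icc (0 : Unitization ℂ A) 1 :=
    CStarAlgebra.mem_Icc_iff_norm_le_one.mpr ⟨hE₀, by rwa [norm_inr]⟩
  have h1E : (1 : Unitization ℂ A) - E ∈ Set.Icc (0 : Unitization ℂ A) 1 :=
    Set.sub_mem_Icc_zero_iff_right.mpr hE
  have h1E' : ‖(1 : Unitization ℂ A) - E‖ ≤ 1 :=
    (CStarAlgebra.mem_Icc_iff_norm_le_one.mp h1E).2
  have hsa : star ((1 : Unitization ℂ A) - E) = 1 - E := h1E.1.star_eq
  have key : X * E - X = -(X * (1 - E)) := by noncomm_ring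
  rw [key, norm_neg]
  calc ‖X * (1 - E)‖ ^ 2 = ‖star (X * (1 - E)) * (X * (1 - E))‖ := by
        rw [sq, CStarRing.norm_star_mul_self]
    _ = ‖(1 - E) * (star X * (X * (1 - E)))‖ := by rw [star_mul, hsa, mul_assoc]
    _ ≤ ‖(1 : Unitization ℂ A) - E‖ * ‖star X * (X * (1 - E))‖ := norm_mul_le _ _
    _ ≤ 1 * ‖star X * (X * (1 - E))‖ := by gcongr
    _ = ‖star X * X * (1 - E)‖ := by rw [one_mul, mul_assoc]
    _ = ‖star (star X * X * (1 - E))‖ := (norm_star _).symm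
    _ = ‖(1 - E) * (star X * X)‖ := by
        rw [star_mul, hsa, star_mul, star_star]
    _ = ‖star X * X - E * (star X * X)‖ := by rw [sub_mul, one_mul]

lemma nnreal_smul_mem (J : Submodule ℂ A) (r : ℝ≥0) {a : A} (ha : a ∈ J) : r • a ∈ J := by
  rw [NNReal.smul_def, ← Complex.coe_smul]; exact J.smul_mem _ ha

lemma real_smul_mem (J : Submodule ℂ A) (r : ℝ) {a : A} (ha : a ∈ J) : r • a ∈ J := by
  rw [← Complex.coe_smul]; exact J.smul_mem _ ha


end Aux

open Unitization CStarAlgebra NNReal in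
theorem closed_left_ideal_has_positive_rcai
    {A : Type u} [NonUnitalCStarAlgebra A] [PartialOrder A] [StarOrderedRing A]
    (J : Submodule ℂ A) (hJc : IsClosed (J : Set A)) (hJ : ∀ a : A, ∀ x ∈ J, a * x ∈ J) :
    ∃ N : DirectedNet.{u} A,
      (∀ i, N.elem i ∈ J) ∧ (∀ i, 0 ≤ N.elem i) ∧ (∀ i, ‖N.elem i‖ ≤ 1) ∧
      ∀ x ∈ J, Tendsto (fun i => ‖x * N.elem i - x‖) atTop (𝓝 0) := by
  set f : ℝ≥0 → ℝ≥0 := fun y => 1 - (1 + y)⁻¹ with hf_def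
  set g : ℝ≥0 → ℝ≥0 := fun y => y * (1 - y)⁻¹ with hg_def
  let ι : Type u := {e : A // e ∈ J ∧ 0 ≤ e ∧ ‖e‖ < 1}
  haveI hne : Nonempty ι := ⟨⟨0, J.zero_mem, le_refl 0, by simp⟩⟩
  haveI hdir : IsDirected ι (· ≤ ·) := by
    constructor
    rintro ⟨a, haJ, ha₁, ha₂⟩ ⟨b, hbJ, hb₁, hb₂⟩
    have hsum_mem : cfcₙ g a + cfcₙ g b ∈ J :=
      J.add_mem (cfcn_nnreal_mem J hJc hJ haJ ha₁ g) (cfcn_nnreal_mem J hJc hJ hbJ hb₁ g)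
    have hsum_nonneg : 0 ≤ cfcₙ g a + cfcₙ g b :=
      add_nonneg cfcₙ_nonneg_of_predicate cfcₙ_nonneg_of_predicate
    refine ⟨⟨cfcₙ f (cfcₙ g a + cfcₙ g b),
      cfcn_nnreal_mem J hJc hJ hsum_mem hsum_nonneg f,
      cfcₙ_nonneg_of_predicate, norm_cfcₙ_one_sub_one_add_inv_lt_one _⟩, ?_, ?_⟩
    · exact le_cfcn_aux a b ha₁ hb₁ ha₂
    · show b ≤ cfcₙ f (cfcₙ g a + cfcₙ g b)
      rw [add_comm]
      exact le_cfcn_aux b a hb₁ ha₁ hb₂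
  refine ⟨⟨ι, hdir, Subtype.val⟩, fun i => i.2.1, fun i => i.2.2.1, fun i => i.2.2.2.le, ?_⟩
  intro x hx
  rw [Metric.tendsto_nhds]
  intro ε hε
  rw [Filter.eventually_iff, Filter.mem_atTop_sets]
  -- setup
  set m : A := star x * x with hm_def
  have hmJ : m ∈ J := hJ (star x) x hx
  have hm₀ : 0 ≤ m := star_mul_self_nonneg x
  set K : ℝ := ‖m‖ + 1 with hK_def
  have hK : 0 < K := by positivity
  set m₁ : A := K⁻¹ • m with hm₁_def
  have hm₁J : m₁ ∈ J := real_smul_mem J _ hmJ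
  have hm₁₀ : 0 ≤ m₁ := smul_nonneg (by positivity) hm₀
  have hm₁norm : ‖m₁‖ < 1 := by
    rw [hm₁_def, norm_smul, Real.norm_eq_abs, abs_of_pos (by positivity)]
    rw [inv_mul_lt_one₀ hK]
    simp [hK_def]
  have hm_eq : m = K • m₁ := by
    rw [hm₁_def, smul_smul, mul_inv_cancel₀ hK.ne', one_smul]
  set η : ℝ≥0 := Real.toNNReal (ε ^ 2 / (8 * K)) with hη_def
  have hη : 0 < η := by
    rw [hη_def, Real.toNNReal_pos]
    positivity
  have hηval : (η : ℝ) = ε ^ 2 / (8 * K) := Real.coe_toNNReal _ (by positivity)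
  set e₀ : A := cfcₙ f (η⁻¹ ^ 2 • m₁) with he₀_def
  have he₀J : e₀ ∈ J := cfcn_nnreal_mem J hJc hJ (nnreal_smul_mem J _ hm₁J)
    (smul_nonneg (by positivity) hm₁₀) f
  have he₀₀ : 0 ≤ e₀ := cfcₙ_nonneg_of_predicate
  have he₀n : ‖e₀‖ < 1 := norm_cfcₙ_one_sub_one_add_inv_lt_one _
  refine ⟨⟨e₀, he₀J, he₀₀, he₀n⟩, ?_⟩
  rintro ⟨e, heJ, he₀', he₁'⟩ (hile : e₀ ≤ e)
  simp only [Set.mem_setOf_eq, Real.dist_0_eq_abs, abs_of_nonneg (norm_nonneg _)]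
  -- key bound from the unitization lemma
  have hinr : ((e₀ : A) : Unitization ℂ A) = cfc f (η⁻¹ ^ 2 • ((m₁ : A) : Unitization ℂ A)) := by
    rw [he₀_def, nnreal_cfcₙ_eq_cfc_inr _ _ (by simp [f, tsub_self]), inr_smul]
  have hkey : ‖star ((m₁ : A) : Unitization ℂ A) * (1 - ((e₀ : A) : Unitization ℂ A))
      * ((m₁ : A) : Unitization ℂ A)‖ ≤ (η : ℝ) ^ 2 := by
    rw [hinr]
    have := key_norm_bound ((m₁ : A) : Unitization ℂ A) (inr_nonneg_iff.mpr hm₁₀)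
      (by rw [norm_inr]; exact hm₁norm.le) η hη
    calc ‖_‖ = ((‖star ((m₁ : A) : Unitization ℂ A) * (1 - cfc f (η⁻¹ ^ 2 •
          ((m₁ : A) : Unitization ℂ A))) * ((m₁ : A) : Unitization ℂ A)‖₊ : ℝ≥0) : ℝ) := rfl
      _ ≤ ((η ^ 2 : ℝ≥0) : ℝ) := by exact_mod_cast this
      _ = (η : ℝ) ^ 2 := by push_cast; ring
  have h1 : ‖m₁ - e * m₁‖ ≤ (η : ℝ) :=
    norm_sub_mul_self_le_of_inr m₁ he₀₀ hile he₁'.le η.coe_nonneg hkey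
  have h2 : ‖m - e * m‖ ≤ K * η := by
    have : m - e * m = K • (m₁ - e * m₁) := by
      rw [hm_eq, smul_sub, mul_smul_comm]
    rw [this, norm_smul, Real.norm_eq_abs, abs_of_pos hK]
    exact mul_le_mul_of_nonneg_left h1 hK.le
  have h3 : ‖x * e - x‖ ^ 2 ≤ ‖m - e * m‖ := sq_norm_mul_sub_le x e he₀' he₁'.le
  have h4 : ‖x * e - x‖ ^ 2 ≤ ε ^ 2 / 8 := by
    refine h3.trans (h2.trans ?_)
    rw [hηval]
    rw [mul_div_assoc']
    rw [div_le_div_iff₀ (by positivity) (by positivity)]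
    ring_nf
    nlinarith [sq_nonneg ε, hK]
  have h5 : ‖x * e - x‖ ≤ ε / 2 := by
    have h8 : ε ^ 2 / 8 ≤ (ε / 2) ^ 2 := by nlinarith [sq_nonneg ε]
    have := h4.trans h8
    exact (pow_le_pow_iff_left₀ (norm_nonneg _) (by positivity) (by norm_num)).mp this
  linarith
end

section
/- Let J be a closed left ideal of a C*-algebra A. Then: (1) the closed linear span of {x* * y : x, y ∈ J} equals J ∩ J* := {x ∈ J : x* ∈ J}; (2) this closed linear span is contained in J (so J is a left ideal of the C*-subalgebra given by the closed span of {x * y* : x, y ∈ J}); and (3) J is contained in the closed linear span of {x * y* : x, y ∈ J}. -/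
open Filter Topology

open scoped ContinuousMapZero in
lemma cfcnHom_mem_of_leftIdeal {A : Type*} [NonUnitalCStarAlgebra A]
    (J : Submodule ℂ A) (hJc : IsClosed (J : Set A)) (hJ : ∀ a : A, ∀ x ∈ J, a * x ∈ J)
    {a : A} (ha : IsSelfAdjoint a) (haJ : a ∈ J)
    (f : C(quasispectrum ℝ a, ℝ)₀) : cfcₙHom ha f ∈ J := by
  have h0 : ((0 : quasispectrum ℝ a) : ℝ) = 0 := rfl
  induction f using ContinuousMapZero.induction_on_of_compact with
  | zero => simpa using J.zero_mem
  | id =>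
    have hiden : cfcₙHom ha (ContinuousMapZero.id (quasispectrum ℝ a)) = a := cfcₙHom_id ha
    rw [hiden]; exact haJ
  | star_id =>
    rw [map_star]
    rw [show cfcₙHom ha (ContinuousMapZero.id (quasispectrum ℝ a)) = a from cfcₙHom_id ha, ha.star_eq]
    exact haJ
  | add f g hf hg => rw [map_add]; exact J.add_mem hf hg
  | mul f g hf hg => rw [map_mul]; exact hJ _ _ hg
  | smul r f hf =>
    rw [map_smul, ← algebraMap_smul ℂ r (cfcₙHom ha f)]
    exact J.smul_mem _ hf
  | frequently f hf =>
    have h₁ : f ∈ closure {g | cfcₙHom ha g ∈ J} := mem_closure_iff_frequently.mpr hf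
    have h₂ : cfcₙHom ha f ∈ closure (J : Set A) :=
      map_mem_closure (cfcₙHom_continuous ha) h₁ fun g hg => hg
    rwa [hJc.closure_eq] at h₂

lemma cfcn_mem_of_leftIdeal {A : Type*} [NonUnitalCStarAlgebra A]
    (J : Submodule ℂ A) (hJc : IsClosed (J : Set A)) (hJ : ∀ a : A, ∀ x ∈ J, a * x ∈ J)
    {a : A} (ha : IsSelfAdjoint a) (haJ : a ∈ J)
    (g : ℝ → ℝ) (hg : ContinuousOn g (quasispectrum ℝ a)) (hg0 : g 0 = 0) :
    cfcₙ g a ∈ J := by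
  rw [cfcₙ_apply g a hg hg0 ha]
  exact cfcnHom_mem_of_leftIdeal J hJc hJ ha haJ _

lemma approx_unit_of_leftIdeal {A : Type*} [NonUnitalCStarAlgebra A]
    (J : Submodule ℂ A) (hJc : IsClosed (J : Set A)) (hJ : ∀ a : A, ∀ x ∈ J, a * x ∈ J)
    {x : A} (hx : x ∈ J) {ε : ℝ} (hε : 0 < ε) :
    ∃ e ∈ J, IsSelfAdjoint e ∧ ‖x - x * e‖ < ε := by
  set a := star x * x with ha_def
  have ha : IsSelfAdjoint a := IsSelfAdjoint.star_mul_self x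
  have haJ : a ∈ J := hJ (star x) x hx
  set s := ε ^ 2 with hs_def
  have hs : 0 < s := by positivity
  set δ := s ^ 2 with hδ_def
  have hδ : 0 < δ := by positivity
  set g : ℝ → ℝ := fun t => t ^ 2 * (t ^ 2 + δ)⁻¹ with hg_def
  have hgc : Continuous g := by
    apply (continuous_pow 2).mul
    exact ((continuous_pow 2).add continuous_const).inv₀ fun t => (add_pos_of_nonneg_of_pos (sq_nonneg t) hδ).ne'
  have hgon : ContinuousOn g (quasispectrum ℝ a) := hgc.continuousOn
  have hg0 : g 0 = 0 := by simp [hg_def]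
  set e := cfcₙ g a with he_def
  have heJ : e ∈ J := cfcn_mem_of_leftIdeal J hJc hJ ha haJ g hgon hg0
  have hesa : IsSelfAdjoint e := cfcₙ_predicate g a
  refine ⟨e, heJ, hesa, ?_⟩
  have hid : ContinuousOn (fun t : ℝ => t) (quasispectrum ℝ a) := continuousOn_id
  -- p t = t - t * g t;  cfcₙ p a = a - a * e
  have hc1 : cfcₙ (fun t : ℝ => t - t * g t) a = a - a * e := by
    rw [cfcₙ_sub (fun t : ℝ => t) (fun t : ℝ => t * g t) a hid rfl
        (hid.mul hgon) (by simp [hg0]),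
      cfcₙ_mul (fun t : ℝ => t) g a hid rfl hgon hg0, cfcₙ_id' ℝ a ha]
  have hpc : ContinuousOn (fun t : ℝ => t - t * g t) (quasispectrum ℝ a) :=
    hid.sub (hid.mul hgon)
  have hp0 : (fun t : ℝ => t - t * g t) 0 = 0 := by simp [hg0]
  have hc2 : cfcₙ (fun t : ℝ => (t - t * g t) - g t * (t - t * g t)) a
      = (a - a * e) - e * (a - a * e) := by
    rw [cfcₙ_sub (fun t : ℝ => t - t * g t) (fun t : ℝ => g t * (t - t * g t)) a hpc hp0
        (hgon.mul hpc) (by simp [hg0]),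
      cfcₙ_mul g (fun t : ℝ => t - t * g t) a hgon hg0 hpc hp0, hc1]
  have hprod : star (x - x * e) * (x - x * e) = (a - a * e) - e * (a - a * e) := by
    rw [star_sub, star_mul, hesa.star_eq]
    simp only [ha_def]
    noncomm_ring
  have hbound : ‖star (x - x * e) * (x - x * e)‖ ≤ s / 2 := by
    rw [hprod, ← hc2]
    apply norm_cfcₙ_le
    intro t _
    have hu : (0 : ℝ) < t ^ 2 + δ := by positivity
    have hval : (t - t * g t) - g t * (t - t * g t) = t * (δ * (t ^ 2 + δ)⁻¹) ^ 2 := by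
      simp only [hg_def]
      field_simp
      ring
    rw [hval, Real.norm_eq_abs]
    rw [abs_mul, abs_pow, abs_mul, abs_of_pos hδ, abs_inv, abs_of_pos hu]
    have h2 : 2 * |t| * s ≤ t ^ 2 + δ := by
      nlinarith [sq_nonneg (|t| - s), sq_abs t]
    have h3 : δ ≤ t ^ 2 + δ := by nlinarith [sq_nonneg t]
    rw [mul_pow, ← mul_assoc, inv_pow,
      mul_inv_le_iff₀ (by positivity : (0:ℝ) < (t ^ 2 + δ) ^ 2)]
    nlinarith [mul_le_mul h2 h3 hδ.le (by positivity : (0:ℝ) ≤ t ^ 2 + δ),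
      hs.le, abs_nonneg t, hδ.le]
  have hsq : ‖x - x * e‖ ^ 2 ≤ s / 2 := by
    rw [sq, ← CStarRing.norm_star_mul_self]
    exact hbound
  have : ‖x - x * e‖ ^ 2 < ε ^ 2 := lt_of_le_of_lt hsq (by rw [hs_def]; nlinarith)
  exact lt_of_pow_lt_pow_left₀ 2 hε.le this

theorem left_ideal_triple_relations
    {A : Type*} [NonUnitalCStarAlgebra A]
    (J : Submodule ℂ A) (hJc : IsClosed (J : Set A)) (hJ : ∀ a : A, ∀ x ∈ J, a * x ∈ J) :
    ((Submodule.span ℂ {z : A | ∃ x ∈ J, ∃ y ∈ J, z = star x * y}).topologicalClosure : Set A)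
      = {x : A | x ∈ J ∧ star x ∈ J} ∧
    ((Submodule.span ℂ {z : A | ∃ x ∈ J, ∃ y ∈ J, z = star x * y}).topologicalClosure : Set A)
      ⊆ (J : Set A) ∧
    (J : Set A) ⊆
      ((Submodule.span ℂ
        {z : A | ∃ x ∈ J, ∃ y ∈ J, z = x * star y}).topologicalClosure : Set A) := by
  -- the submodule J ⊓ J*
  let K : Submodule ℂ A :=
    { carrier := {x : A | x ∈ J ∧ star x ∈ J}
      add_mem' := fun {a b} ha hb => ⟨J.add_mem ha.1 hb.1, by
        rw [star_add]; exact J.add_mem ha.2 hb.2⟩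
      zero_mem' := ⟨J.zero_mem, by simpa using J.zero_mem⟩
      smul_mem' := fun c {x} hx => ⟨J.smul_mem c hx.1, by
        rw [star_smul]; exact J.smul_mem _ hx.2⟩ }
  have hKc : IsClosed (K : Set A) := by
    have : (K : Set A) = (J : Set A) ∩ (star ⁻¹' (J : Set A)) := rfl
    rw [this]
    exact hJc.inter (hJc.preimage continuous_star)
  have hspan_le : Submodule.span ℂ {z : A | ∃ x ∈ J, ∃ y ∈ J, z = star x * y} ≤ K := by
    rw [Submodule.span_le]
    rintro _ ⟨x, hxJ, y, hyJ, rfl⟩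
    exact ⟨hJ (star x) y hyJ, by rw [star_mul, star_star]; exact hJ (star y) x hxJ⟩
  have hsub : ((Submodule.span ℂ
      {z : A | ∃ x ∈ J, ∃ y ∈ J, z = star x * y}).topologicalClosure : Set A)
      ⊆ {x : A | x ∈ J ∧ star x ∈ J} :=
    fun x hx => Submodule.topologicalClosure_minimal _ hspan_le hKc hx
  have hsup : {x : A | x ∈ J ∧ star x ∈ J} ⊆
      ((Submodule.span ℂ
        {z : A | ∃ x ∈ J, ∃ y ∈ J, z = star x * y}).topologicalClosure : Set A) := by
    rintro x ⟨hxJ, hsxJ⟩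
    rw [Submodule.topologicalClosure_coe]
    rw [Metric.mem_closure_iff]
    intro ε hε
    obtain ⟨e, heJ, hesa, hne⟩ := approx_unit_of_leftIdeal J hJc hJ hxJ hε
    refine ⟨x * e, ?_, ?_⟩
    · apply Submodule.subset_span
      exact ⟨star x, hsxJ, e, heJ, by rw [star_star]⟩
    · rwa [dist_eq_norm]
  refine ⟨Set.Subset.antisymm hsub hsup, fun x hx => (hsub hx).1, ?_⟩
  intro x hxJ
  rw [Submodule.topologicalClosure_coe, Metric.mem_closure_iff]
  intro ε hε
  obtain ⟨e, heJ, hesa, hne⟩ := approx_unit_of_leftIdeal J hJc hJ hxJ hε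
  refine ⟨x * e, ?_, ?_⟩
  · apply Submodule.subset_span
    exact ⟨x, hxJ, e, heJ, by rw [hesa.star_eq]⟩
  · rwa [dist_eq_norm]
end

section
/- Let A be a norm-closed subalgebra of a C*-algebra, and let (e_i)_{i ∈ ι} be a right contractive approximate identity for A (a net in A with ‖e_i‖ ≤ 1 and ‖a * e_i − a‖ → 0 for all a ∈ A) which additionally satisfies ‖e_i * e_j − e_j‖ → 0 (as i → atTop) for each fixed j ∈ ι. Define R = {x ∈ A : ‖e_i * x − x‖ → 0}. Then: (1) R is a norm-closed linear subspace of A which is a right ideal of A (x ∈ R and a ∈ A imply x * a ∈ R); (2) each e_j ∈ R and (e_i) is a two-sided contractive approximate identity for R (for x ∈ R, both ‖e_i * x − x‖ → 0 and ‖x * e_i − x‖ → 0); (3) the closed linear span of {a * x : a ∈ A, x ∈ R} equals A, and the closed linear span of {x * a : x ∈ R, a ∈ A} equals R. -/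
open Filter Topology

theorem property_R_ideal
    {C : Type*} [NonUnitalCStarAlgebra C]
    (A : NonUnitalSubalgebra ℂ C) (hA : IsClosed (A : Set C))
    {ι : Type*} [Preorder ι] [Nonempty ι] [IsDirected ι (· ≤ ·)]
    (e : ι → C) (heA : ∀ i, e i ∈ A) (hen : ∀ i, ‖e i‖ ≤ 1)
    (hrcai : ∀ a ∈ A, Tendsto (fun i => ‖a * e i - a‖) atTop (𝓝 0))
    (hpropR : ∀ j, Tendsto (fun i => ‖e i * e j - e j‖) atTop (𝓝 0))
    (R : Set C)
    (hRdef : R = {x : C | x ∈ A ∧ Tendsto (fun i => ‖e i * x - x‖) atTop (𝓝 0)}) :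
    IsClosed R ∧ R ⊆ (A : Set C) ∧ (0 : C) ∈ R ∧
    (∀ x ∈ R, ∀ y ∈ R, x + y ∈ R) ∧ (∀ (c : ℂ), ∀ x ∈ R, c • x ∈ R) ∧
    (∀ x ∈ R, ∀ a ∈ A, x * a ∈ R) ∧
    (∀ j, e j ∈ R) ∧
    (∀ x ∈ R, Tendsto (fun i => ‖e i * x - x‖) atTop (𝓝 0) ∧
      Tendsto (fun i => ‖x * e i - x‖) atTop (𝓝 0)) ∧
    ((Submodule.span ℂ {z : C | ∃ a ∈ A, ∃ x ∈ R, z = a * x}).topologicalClosure : Set C)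
      = (A : Set C) ∧
    ((Submodule.span ℂ {z : C | ∃ x ∈ R, ∃ a ∈ A, z = x * a}).topologicalClosure : Set C)
      = R := by
  subst hRdef
  set R : Set C := {x : C | x ∈ A ∧ Tendsto (fun i => ‖e i * x - x‖) atTop (𝓝 0)} with hR
  have hsub : R ⊆ (A : Set C) := fun x hx => hx.1
  have h0 : (0 : C) ∈ R := by
    refine ⟨A.zero_mem, ?_⟩
    simp only [mul_zero, sub_zero, norm_zero]; exact (tendsto_const_nhds : Tendsto (fun _ : ι => (0:ℝ)) atTop (𝓝 0))
  have hadd : ∀ x ∈ R, ∀ y ∈ R, x + y ∈ R := by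
    intro x hx y hy
    refine ⟨A.add_mem hx.1 hy.1, ?_⟩
    have hle : ∀ i, ‖e i * (x + y) - (x + y)‖ ≤ ‖e i * x - x‖ + ‖e i * y - y‖ := by
      intro i
      have : e i * (x + y) - (x + y) = (e i * x - x) + (e i * y - y) := by
        rw [mul_add]; abel
      rw [this]; exact norm_add_le _ _
    have := (hx.2.add hy.2)
    rw [add_zero] at this
    exact squeeze_zero (fun i => norm_nonneg _) hle this
  have hsmul : ∀ (c : ℂ), ∀ x ∈ R, c • x ∈ R := by
    intro c x hx
    refine ⟨A.smul_mem c hx.1, ?_⟩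
    have heq : ∀ i, ‖e i * (c • x) - c • x‖ = ‖c‖ * ‖e i * x - x‖ := by
      intro i
      rw [mul_smul_comm, ← smul_sub, norm_smul]
    simp only [heq]
    have := hx.2.const_mul ‖c‖
    simpa using this
  have hideal : ∀ x ∈ R, ∀ a ∈ A, x * a ∈ R := by
    intro x hx a ha
    refine ⟨A.mul_mem hx.1 ha, ?_⟩
    have hle : ∀ i, ‖e i * (x * a) - x * a‖ ≤ ‖e i * x - x‖ * ‖a‖ := by
      intro i
      have : e i * (x * a) - x * a = (e i * x - x) * a := by
        rw [sub_mul, mul_assoc]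
      rw [this]; exact norm_mul_le _ _
    have := hx.2.mul_const ‖a‖
    rw [zero_mul] at this
    exact squeeze_zero (fun i => norm_nonneg _) hle this
  have heR : ∀ j, e j ∈ R := fun j => ⟨heA j, hpropR j⟩
  have hclosed : IsClosed R := by
    refine isClosed_of_closure_subset ?_
    intro x hx
    have hxA : x ∈ A := hA.closure_subset (closure_mono hsub hx)
    refine ⟨hxA, ?_⟩
    rw [Metric.tendsto_nhds]
    intro ε hε
    obtain ⟨y, hyR, hxy⟩ := Metric.mem_closure_iff.mp hx (ε/3) (by positivity)
    have hev := (Metric.tendsto_nhds.mp hyR.2) (ε/3) (by positivity)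
    filter_upwards [hev] with i hi
    rw [Real.dist_eq, sub_zero, abs_of_nonneg (norm_nonneg _)] at hi ⊢
    have key : e i * x - x = e i * (x - y) + (e i * y - y) + (y - x) := by
      rw [mul_sub]; abel
    have h1 : ‖e i * (x - y)‖ ≤ ‖x - y‖ := by
      calc ‖e i * (x - y)‖ ≤ ‖e i‖ * ‖x - y‖ := norm_mul_le _ _
        _ ≤ 1 * ‖x - y‖ := by
            exact mul_le_mul_of_nonneg_right (hen i) (norm_nonneg _)
        _ = ‖x - y‖ := one_mul _
    have hxy' : ‖x - y‖ < ε/3 := by rwa [← dist_eq_norm]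
    have hyx' : ‖y - x‖ < ε/3 := by rwa [← dist_eq_norm, dist_comm]
    calc ‖e i * x - x‖ = ‖e i * (x - y) + (e i * y - y) + (y - x)‖ := by rw [key]
      _ ≤ ‖e i * (x - y)‖ + ‖e i * y - y‖ + ‖y - x‖ := norm_add₃_le
      _ < ε/3 + ε/3 + ε/3 := by
          exact add_lt_add (add_lt_add (h1.trans_lt hxy') hi) hyx'
      _ = ε := by ring
  have hcai : ∀ x ∈ R, Tendsto (fun i => ‖e i * x - x‖) atTop (𝓝 0) ∧
      Tendsto (fun i => ‖x * e i - x‖) atTop (𝓝 0) :=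
    fun x hx => ⟨hx.2, hrcai x hx.1⟩
  -- the submodule structure on R
  let R' : Submodule ℂ C :=
    { carrier := R
      add_mem' := fun {x y} hx hy => hadd x hx y hy
      zero_mem' := h0
      smul_mem' := fun c x hx => hsmul c x hx }
  refine ⟨hclosed, hsub, h0, hadd, hsmul, hideal, heR, hcai, ?_, ?_⟩
  · apply Set.Subset.antisymm
    · rw [Submodule.topologicalClosure_coe]
      refine closure_minimal ?_ hA
      have : Submodule.span ℂ {z : C | ∃ a ∈ A, ∃ x ∈ R, z = a * x} ≤ A.toSubmodule := by
        rw [Submodule.span_le]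
        rintro z ⟨a, ha, x, hx, rfl⟩
        exact A.mul_mem ha hx.1
      exact this
    · intro a ha
      rw [Submodule.topologicalClosure_coe]
      have htend : Tendsto (fun i => a * e i) atTop (𝓝 a) :=
        tendsto_iff_norm_sub_tendsto_zero.mpr (hrcai a ha)
      refine mem_closure_of_tendsto htend (Eventually.of_forall fun i => ?_)
      exact Submodule.subset_span ⟨a, ha, e i, heR i, rfl⟩
  · apply Set.Subset.antisymm
    · rw [Submodule.topologicalClosure_coe]
      refine closure_minimal ?_ hclosed
      have : Submodule.span ℂ {z : C | ∃ x ∈ R, ∃ a ∈ A, z = x * a} ≤ R' := by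
        rw [Submodule.span_le]
        rintro z ⟨x, hx, a, ha, rfl⟩
        exact hideal x hx a ha
      exact this
    · intro x hx
      rw [Submodule.topologicalClosure_coe]
      have htend : Tendsto (fun i => x * e i) atTop (𝓝 x) :=
        tendsto_iff_norm_sub_tendsto_zero.mpr (hrcai x hx.1)
      refine mem_closure_of_tendsto htend (Eventually.of_forall fun i => ?_)
      exact Submodule.subset_span ⟨x, hx, e i, heA i, rfl⟩
end

section
/- Let A be a norm-closed subalgebra of a C*-algebra, and let (e_i)_{i ∈ ι} and (f_j)_{j ∈ κ} be two right contractive approximate identities for A (nets in A of norm at most 1 with ‖a * e_i − a‖ → 0 and ‖a * f_j − a‖ → 0 for every a ∈ A) such that ‖e_i * e_{i'} − e_{i'}‖ → 0 (in i) for each fixed i' ∈ ι, and ‖f_j * f_{j'} − f_{j'}‖ → 0 (in j) for each fixed j' ∈ κ. Then {x ∈ A : ‖e_i * x − x‖ → 0} = {x ∈ A : ‖f_j * x − x‖ → 0}. -/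
open Filter Topology Unitization

section AuxCStar

variable {C : Type*} [NonUnitalCStarAlgebra C]

private lemma le_of_sq_le_sq'' {a b : ℝ} (ha : 0 ≤ a) (hb : 0 ≤ b) (h : a^2 ≤ b^2) : a ≤ b := by
  have := Real.sqrt_le_sqrt h
  rwa [Real.sqrt_sq ha, Real.sqrt_sq hb] at this

/-- If `star r * r ≤ -(w + star w)` then `‖r‖² ≤ 2‖w‖`. -/
private lemma key_ineq {r w : Unitization ℂ C} (h : star r * r ≤ -(w + star w)) :
    ‖r‖^2 ≤ 2 * ‖w‖ := by
  have hsa : IsSelfAdjoint (-(w + star w)) := by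
    rw [IsSelfAdjoint, star_neg, star_add, star_star, add_comm]
  have h2 : star r * r ≤ algebraMap ℝ (Unitization ℂ C) ‖-(w + star w)‖ :=
    h.trans hsa.le_algebraMap_norm_self
  have h3 : ‖star r * r‖ ≤ ‖algebraMap ℝ (Unitization ℂ C) (‖-(w + star w)‖)‖ :=
    CStarAlgebra.norm_le_norm_of_nonneg_of_le (star_mul_self_nonneg r) h2
  rw [norm_algebraMap', CStarRing.norm_star_mul_self] at h3
  have h4 : ‖-(w + star w)‖ ≤ 2 * ‖w‖ := by
    rw [norm_neg]
    calc ‖w + star w‖ ≤ ‖w‖ + ‖star w‖ := norm_add_le _ _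
      _ = 2 * ‖w‖ := by rw [norm_star]; ring
  have h5 : ‖(‖-(w + star w)‖ : ℝ)‖ = ‖-(w + star w)‖ := Real.norm_of_nonneg (norm_nonneg _)
  rw [h5] at h3
  nlinarith [norm_nonneg r]

/-- If `p` is a contraction and `p * X ≈ X`, then `star p * X ≈ X`. -/
private lemma star_approx (p X : Unitization ℂ C) (hp : ‖p‖ ≤ 1) :
    ‖star p * X - X‖^2 ≤ 2 * (‖X‖ * ‖p * X - X‖) := by
  set u : Unitization ℂ C := star X * p * X - star X * X with hu
  have hpp : p * star p ≤ 1 := by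
    rw [← CStarAlgebra.norm_le_one_iff_of_nonneg _ (mul_star_self_nonneg p),
      CStarRing.norm_self_mul_star]
    nlinarith [norm_nonneg p]
  have hconj : star X * (p * star p) * X ≤ star X * 1 * X := star_left_conjugate_le_conjugate hpp X
  have expand : star (star p * X - X) * (star p * X - X)
      = (star X * (p * star p) * X - star X * 1 * X) - (u + star u) := by
    simp only [hu, star_sub, star_mul, star_star]
    noncomm_ring
  have hle : star (star p * X - X) * (star p * X - X) ≤ -(u + star u) := by
    rw [expand]
    calc (star X * (p * star p) * X - star X * 1 * X) - (u + star u)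
        ≤ 0 - (u + star u) := sub_le_sub_right (sub_nonpos.mpr hconj) _
      _ = -(u + star u) := zero_sub _
  have final := key_ineq hle
  have hun : ‖u‖ ≤ ‖X‖ * ‖p * X - X‖ := by
    have h : u = star X * (p * X - X) := by rw [hu]; noncomm_ring
    rw [h]
    calc ‖star X * (p * X - X)‖ ≤ ‖star X‖ * ‖p * X - X‖ := norm_mul_le _ _
      _ = ‖X‖ * ‖p * X - X‖ := by rw [norm_star]
  nlinarith [norm_nonneg X, norm_nonneg (p * X - X)]

/-- If `q` is a contraction, then `‖q X - X‖² ≤ 2 ‖X* X - X* q X‖`. -/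
private lemma final_step (q X : Unitization ℂ C) (hq : ‖q‖ ≤ 1) :
    ‖q * X - X‖^2 ≤ 2 * ‖star X * X - star X * q * X‖ := by
  set v : Unitization ℂ C := star X * X - star X * q * X with hv
  have hqq : star q * q ≤ 1 := by
    rw [← CStarAlgebra.norm_le_one_iff_of_nonneg _ (star_mul_self_nonneg q),
      CStarRing.norm_star_mul_self]
    nlinarith [norm_nonneg q]
  have hconj : star X * (star q * q) * X ≤ star X * 1 * X := star_left_conjugate_le_conjugate hqq X
  have expand : star (q * X - X) * (q * X - X)
      = (star X * (star q * q) * X - star X * 1 * X) - ((-v) + star (-v)) := by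
    simp only [hv, star_neg, star_sub, star_mul, star_star]
    noncomm_ring
  have hle : star (q * X - X) * (q * X - X) ≤ -((-v) + star (-v)) := by
    rw [expand]
    calc (star X * (star q * q) * X - star X * 1 * X) - ((-v) + star (-v))
        ≤ 0 - ((-v) + star (-v)) := sub_le_sub_right (sub_nonpos.mpr hconj) _
      _ = -((-v) + star (-v)) := zero_sub _
  have final := key_ineq hle
  rwa [norm_neg] at final

set_option maxHeartbeats 1000000 in
/-- The main transfer lemma: if `(e i)` consists of contractions in `A` with `e i * x → x`,
and `(f j)` is a right contractive approximate identity for `A`, then `f j * x → x`. -/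
private lemma rcai_transfer
    (A : NonUnitalSubalgebra ℂ C)
    {ι : Type*} [Preorder ι] [Nonempty ι] [IsDirected ι (· ≤ ·)]
    {κ : Type*} [Preorder κ] [Nonempty κ] [IsDirected κ (· ≤ ·)]
    (e : ι → C) (heA : ∀ i, e i ∈ A) (hen : ∀ i, ‖e i‖ ≤ 1)
    (f : κ → C) (hfn : ∀ j, ‖f j‖ ≤ 1)
    (hrcaif : ∀ a ∈ A, Tendsto (fun j => ‖a * f j - a‖) atTop (𝓝 0))
    {x : C} (hex : Tendsto (fun i => ‖e i * x - x‖) atTop (𝓝 0)) :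
    Tendsto (fun j => ‖f j * x - x‖) atTop (𝓝 0) := by
  haveI : (atTop : Filter ι).NeBot := atTop_neBot
  rw [Metric.tendsto_nhds]
  intro ε hε
  set B : ℝ := ‖x‖ + 1 with hBdef
  have hB1 : 1 ≤ B := by rw [hBdef]; nlinarith [norm_nonneg x]
  have hB0 : 0 < B := by linarith
  have hxB : ‖x‖ ≤ B := by rw [hBdef]; linarith
  have hB2 : (0:ℝ) < 16 * B^2 := by nlinarith [pow_pos hB0 2]
  have hB3 : (0:ℝ) < 128 * B^3 := by nlinarith [pow_pos hB0 3]
  set ε₁ : ℝ := min (ε^2/(16*B^2)) (ε^4/(128*B^3)) with hε₁def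
  have hε₁pos : 0 < ε₁ :=
    lt_min (div_pos (pow_pos hε 2) hB2) (div_pos (pow_pos hε 4) hB3)
  have k1 : ε₁ * (16 * B^2) ≤ ε^2 := (le_div_iff₀ hB2).mp (min_le_left _ _)
  have k2 : ε₁ * (128 * B^3) ≤ ε^4 := (le_div_iff₀ hB3).mp (min_le_right _ _)
  -- pick a suitable index `i`
  have h1 : ∀ᶠ i in atTop, ‖e i * x - x‖ < ε₁ := by
    filter_upwards [Metric.tendsto_nhds.mp hex ε₁ hε₁pos] with i hi
    rwa [Real.dist_eq, sub_zero, abs_of_nonneg (norm_nonneg _)] at hi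
  obtain ⟨i, hi⟩ := h1.exists
  have h2 : ∀ᶠ j in atTop, ‖e i * f j - e i‖ < ε₁ := by
    filter_upwards [Metric.tendsto_nhds.mp (hrcaif (e i) (heA i)) ε₁ hε₁pos] with j hj
    rwa [Real.dist_eq, sub_zero, abs_of_nonneg (norm_nonneg _)] at hj
  filter_upwards [h2] with j hj
  rw [Real.dist_eq, sub_zero, abs_of_nonneg (norm_nonneg _)]
  -- move to the unitization
  set X : Unitization ℂ C := (x : Unitization ℂ C) with hX
  set p : Unitization ℂ C := ((e i : C) : Unitization ℂ C) with hp
  set q : Unitization ℂ C := ((f j : C) : Unitization ℂ C) with hq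
  have hgoal_eq : ‖f j * x - x‖ = ‖q * X - X‖ := by
    rw [hq, hX, ← Unitization.inr_mul, ← Unitization.inr_sub, Unitization.norm_inr]
  rw [hgoal_eq]
  have hXnorm : ‖X‖ ≤ B := by rw [hX, Unitization.norm_inr]; exact hxB
  have hp1 : ‖p‖ ≤ 1 := by rw [hp, Unitization.norm_inr]; exact hen i
  have hq1 : ‖q‖ ≤ 1 := by rw [hq, Unitization.norm_inr]; exact hfn j
  have hpX : ‖p * X - X‖ < ε₁ := by
    rw [hp, hX, ← Unitization.inr_mul, ← Unitization.inr_sub, Unitization.norm_inr]; exact hi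
  have hpq : ‖p * q - p‖ < ε₁ := by
    rw [hp, hq, ← Unitization.inr_mul, ← Unitization.inr_sub, Unitization.norm_inr]; exact hj
  -- `star p * X ≈ X`
  have hstar2 := star_approx p X hp1
  set s : ℝ := Real.sqrt (2*(B*ε₁)) with hsdef
  have hs0 : 0 ≤ s := Real.sqrt_nonneg _
  have hs2 : s^2 = 2*(B*ε₁) := Real.sq_sqrt (by nlinarith)
  have hstar : ‖star p * X - X‖ ≤ s := by
    apply le_of_sq_le_sq'' (norm_nonneg _) hs0
    rw [hs2]
    nlinarith [norm_nonneg (p * X - X), norm_nonneg X, hpX.le, hXnorm, hε₁pos.le]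
  -- bound on `s`
  have ksB : s * (8*B) ≤ ε^2 := by
    apply le_of_sq_le_sq'' (by nlinarith) (by positivity)
    calc (s * (8*B))^2 = 64*B^2*s^2 := by ring
      _ = ε₁ * (128 * B^3) := by rw [hs2]; ring
      _ ≤ ε^4 := k2
      _ = (ε^2)^2 := by ring
  -- the three pieces of `X* X - X* q X`
  have ht1 : ‖star X * X - star X * p * X‖ ≤ B * ε₁ := by
    have hrw : star X * X - star X * p * X = star X * -(p * X - X) := by noncomm_ring
    rw [hrw]
    calc ‖star X * -(p * X - X)‖ ≤ ‖star X‖ * ‖-(p * X - X)‖ := norm_mul_le _ _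
      _ = ‖X‖ * ‖p * X - X‖ := by rw [norm_star, norm_neg]
      _ ≤ B * ε₁ := mul_le_mul hXnorm hpX.le (norm_nonneg _) hB0.le
  have ht2 : ‖star X * p * X - star X * (p * q) * X‖ ≤ B * (ε₁ * B) := by
    have hrw : star X * p * X - star X * (p * q) * X = star X * (-(p * q - p) * X) := by
      noncomm_ring
    rw [hrw]
    calc ‖star X * (-(p * q - p) * X)‖ ≤ ‖star X‖ * ‖-(p * q - p) * X‖ := norm_mul_le _ _
      _ ≤ ‖star X‖ * (‖-(p * q - p)‖ * ‖X‖) :=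
          mul_le_mul_of_nonneg_left (norm_mul_le _ _) (norm_nonneg _)
      _ = ‖X‖ * (‖p * q - p‖ * ‖X‖) := by rw [norm_star, norm_neg]
      _ ≤ B * (ε₁ * B) := by
          apply mul_le_mul hXnorm
            (mul_le_mul hpq.le hXnorm (norm_nonneg _) hε₁pos.le)
            (mul_nonneg (norm_nonneg _) (norm_nonneg _)) hB0.le
  have ht3 : ‖star X * (p * q) * X - star X * q * X‖ ≤ s * B := by
    have hrw : star X * (p * q) * X - star X * q * X = (star (star p * X - X)) * (q * X) := by
      simp only [star_sub, star_mul, star_star]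
      noncomm_ring
    rw [hrw]
    calc ‖(star (star p * X - X)) * (q * X)‖ ≤ ‖star (star p * X - X)‖ * ‖q * X‖ :=
          norm_mul_le _ _
      _ = ‖star p * X - X‖ * ‖q * X‖ := by rw [norm_star]
      _ ≤ s * B := by
          apply mul_le_mul hstar ?_ (norm_nonneg _) hs0
          calc ‖q * X‖ ≤ ‖q‖ * ‖X‖ := norm_mul_le _ _
            _ ≤ 1 * B := mul_le_mul hq1 hXnorm (norm_nonneg _) zero_le_one
            _ = B := one_mul B
  have hv : ‖star X * X - star X * q * X‖ ≤ B * ε₁ + B * (ε₁ * B) + s * B := by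
    have hsplit : star X * X - star X * q * X =
        (star X * X - star X * p * X) + (star X * p * X - star X * (p * q) * X)
          + (star X * (p * q) * X - star X * q * X) := by abel
    rw [hsplit]
    calc ‖(star X * X - star X * p * X) + (star X * p * X - star X * (p * q) * X)
          + (star X * (p * q) * X - star X * q * X)‖
        ≤ ‖star X * X - star X * p * X‖ + ‖star X * p * X - star X * (p * q) * X‖
          + ‖star X * (p * q) * X - star X * q * X‖ := norm_add₃_le
      _ ≤ B * ε₁ + B * (ε₁ * B) + s * B := by linarith
  have hfin2 := final_step q X hq1
  -- numeric endgame
  clear_value B ε₁ s X p q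
  have hBe : B * ε₁ ≤ B^2 * ε₁ := by nlinarith [hε₁pos.le, hB1, hB0.le]
  have hfinal : ‖q * X - X‖^2 < ε^2 := by
    have hB2e : B^2 * ε₁ ≤ ε^2 / 16 := by nlinarith [k1]
    have hsBe : s * B ≤ ε^2 / 8 := by nlinarith [ksB]
    nlinarith [pow_pos hε 2, hfin2, hv]
  nlinarith [norm_nonneg (q * X - X), hε, hfinal]

end AuxCStar

theorem property_R_independent_of_rcai
    {C : Type*} [NonUnitalCStarAlgebra C]
    (A : NonUnitalSubalgebra ℂ C) (hA : IsClosed (A : Set C))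
    {ι : Type*} [Preorder ι] [Nonempty ι] [IsDirected ι (· ≤ ·)]
    {κ : Type*} [Preorder κ] [Nonempty κ] [IsDirected κ (· ≤ ·)]
    (e : ι → C) (heA : ∀ i, e i ∈ A) (hen : ∀ i, ‖e i‖ ≤ 1)
    (hrcaie : ∀ a ∈ A, Tendsto (fun i => ‖a * e i - a‖) atTop (𝓝 0))
    (hpropRe : ∀ i', Tendsto (fun i => ‖e i * e i' - e i'‖) atTop (𝓝 0))
    (f : κ → C) (hfA : ∀ j, f j ∈ A) (hfn : ∀ j, ‖f j‖ ≤ 1)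
    (hrcaif : ∀ a ∈ A, Tendsto (fun j => ‖a * f j - a‖) atTop (𝓝 0))
    (hpropRf : ∀ j', Tendsto (fun j => ‖f j * f j' - f j'‖) atTop (𝓝 0)) :
    {x : C | x ∈ A ∧ Tendsto (fun i => ‖e i * x - x‖) atTop (𝓝 0)}
      = {x : C | x ∈ A ∧ Tendsto (fun j => ‖f j * x - x‖) atTop (𝓝 0)} := by
  ext x
  simp only [Set.mem_setOf_eq]
  constructor
  · rintro ⟨hxA, hx⟩
    exact ⟨hxA, rcai_transfer A e heA hen f hfn hrcaif hx⟩
  · rintro ⟨hxA, hx⟩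
    exact ⟨hxA, rcai_transfer A f hfA hfn e hen hrcaie hx⟩
end

section
/- Let C be a C*-algebra, let A be a norm-closed subalgebra of C, and let (e_i)_{i ∈ ι} be a left contractive approximate identity for A (a net in A with ‖e_i‖ ≤ 1 and ‖e_i * a − a‖ → 0 for every a ∈ A) which additionally satisfies ‖e_j * e_i − e_j‖ → 0 (as i → atTop) for each fixed j ∈ ι. Define L = {x ∈ A : ‖x * e_i − x‖ → 0}. Then for every c ∈ C: (c * a ∈ A for all a ∈ A) if and only if (c * x ∈ L for all x ∈ L). That is, the left idealizer of A in C coincides with the left idealizer of L in C. -/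
open Filter Topology

theorem left_idealizer_eq_left_idealizer_of_L
    {C : Type*} [NonUnitalCStarAlgebra C]
    (A : NonUnitalSubalgebra ℂ C) (hA : IsClosed (A : Set C))
    {ι : Type*} [Preorder ι] [Nonempty ι] [IsDirected ι (· ≤ ·)]
    (e : ι → C) (heA : ∀ i, e i ∈ A) (hen : ∀ i, ‖e i‖ ≤ 1)
    (hlcai : ∀ a ∈ A, Tendsto (fun i => ‖e i * a - a‖) atTop (𝓝 0))
    (hpropL : ∀ j, Tendsto (fun i => ‖e j * e i - e j‖) atTop (𝓝 0))
    (L : Set C)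
    (hLdef : L = {x : C | x ∈ A ∧ Tendsto (fun i => ‖x * e i - x‖) atTop (𝓝 0)})
    (c : C) :
    (∀ a ∈ A, c * a ∈ A) ↔ (∀ x ∈ L, c * x ∈ L) := by
  subst hLdef
  constructor
  · rintro h x ⟨hxA, hxt⟩
    refine ⟨h x hxA, ?_⟩
    have hb : ∀ i, ‖c * x * e i - c * x‖ ≤ ‖c‖ * ‖x * e i - x‖ := by
      intro i
      calc ‖c * x * e i - c * x‖ = ‖c * (x * e i - x)‖ := by rw [mul_sub, mul_assoc]
        _ ≤ ‖c‖ * ‖x * e i - x‖ := norm_mul_le _ _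
    have h0 : Tendsto (fun i => ‖c‖ * ‖x * e i - x‖) atTop (𝓝 0) := by
      simpa using hxt.const_mul ‖c‖
    exact squeeze_zero (fun i => norm_nonneg _) hb h0
  · intro h a ha
    have heL : ∀ j, c * e j ∈ A := fun j => (h (e j) ⟨heA j, hpropL j⟩).1
    have hmem : ∀ j, c * e j * a ∈ A := fun j => A.mul_mem (heL j) ha
    have htend : Tendsto (fun j => c * e j * a) atTop (𝓝 (c * a)) := by
      rw [tendsto_iff_norm_sub_tendsto_zero]
      have hb : ∀ j, ‖c * e j * a - c * a‖ ≤ ‖c‖ * ‖e j * a - a‖ := by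
        intro j
        calc ‖c * e j * a - c * a‖ = ‖c * (e j * a - a)‖ := by
              rw [mul_sub, mul_assoc]
          _ ≤ ‖c‖ * ‖e j * a - a‖ := norm_mul_le _ _
      have h0 : Tendsto (fun j => ‖c‖ * ‖e j * a - a‖) atTop (𝓝 0) := by
        simpa using (hlcai a ha).const_mul ‖c‖
      exact squeeze_zero (fun j => norm_nonneg _) hb h0
    exact hA.mem_of_tendsto htend (Eventually.of_forall hmem)
end

section
/- Let A and B be norm-closed subalgebras of C*-algebras, each possessing a left contractive approximate identity, and let π : A → B be a contractive algebra homomorphism (linear, multiplicative, ‖π(a)‖ ≤ ‖a‖). Then the following are equivalent: (i) there exists a left contractive approximate identity (e_i)_{i ∈ ι} for A such that ‖π(e_i) * b − b‖ → 0 for every b ∈ B; (ii) for every left contractive approximate identity (e_i)_{i ∈ ι} for A, ‖π(e_i) * b − b‖ → 0 for every b ∈ B; (iii) the closed linear span of {π(a) * b : a ∈ A, b ∈ B} equals B. -/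
open Filter Topology

/-- `N` is a left contractive approximate identity for the norm-closed subalgebra `A`. -/
def DirectedNet.IsLCAI {C : Type u} [NonUnitalCStarAlgebra C]
    (A : NonUnitalSubalgebra ℂ C) (N : DirectedNet ↥A) : Prop :=
  (∀ i, ‖(N.elem i : C)‖ ≤ 1) ∧
  ∀ a : A, Tendsto (fun i => ‖(N.elem i : C) * (a : C) - (a : C)‖) atTop (𝓝 0)

theorem A_nondegenerate_morphism_tfae
    {C : Type u} {D : Type v} [NonUnitalCStarAlgebra C] [NonUnitalCStarAlgebra D]
    (A : NonUnitalSubalgebra ℂ C) (hAc : IsClosed (A : Set C))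
    (B : NonUnitalSubalgebra ℂ D) (hBc : IsClosed (B : Set D))
    (hAlcai : ∃ N : DirectedNet.{u} ↥A, N.IsLCAI A)
    (hBlcai : ∃ M : DirectedNet.{v} ↥B, M.IsLCAI B)
    (π : A →ₗ[ℂ] B)
    (hmul : ∀ x y z : A, (z : C) = (x : C) * (y : C) → (π z : D) = (π x : D) * (π y : D))
    (hcontr : ∀ a : A, ‖(π a : D)‖ ≤ ‖(a : C)‖) :
    -- (i) ↔ (iii)
    ((∃ N : DirectedNet.{u} ↥A, N.IsLCAI A ∧
        ∀ b : B, Tendsto (fun i => ‖(π (N.elem i) : D) * (b : D) - (b : D)‖) atTop (𝓝 0)) ↔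
      ((Submodule.span ℂ
          {z : D | ∃ (a : A) (b : B), z = (π a : D) * (b : D)}).topologicalClosure : Set D)
        = (B : Set D)) ∧
    -- (ii) ↔ (iii)
    ((∀ N : DirectedNet.{u} ↥A, N.IsLCAI A →
        ∀ b : B, Tendsto (fun i => ‖(π (N.elem i) : D) * (b : D) - (b : D)‖) atTop (𝓝 0)) ↔
      ((Submodule.span ℂ
          {z : D | ∃ (a : A) (b : B), z = (π a : D) * (b : D)}).topologicalClosure : Set D)
        = (B : Set D)) := by
  classical
  set G : Set D := {z : D | ∃ (a : A) (b : B), z = (π a : D) * (b : D)} with hG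
  set S : Submodule ℂ D := Submodule.span ℂ G with hSdef
  -- the closure of the span is contained in B
  have hle : S ≤ B.toSubmodule := by
    rw [hSdef, Submodule.span_le]
    rintro z ⟨a, b, rfl⟩
    show (π a : D) * (b : D) ∈ B
    exact mul_mem (π a).2 b.2
  have hsub : (S.topologicalClosure : Set D) ⊆ (B : Set D) :=
    Submodule.topologicalClosure_minimal S hle hBc
  -- (i) → (iii)
  have h13 : (∃ N : DirectedNet.{u} ↥A, N.IsLCAI A ∧
        ∀ b : B, Tendsto (fun i => ‖(π (N.elem i) : D) * (b : D) - (b : D)‖) atTop (𝓝 0)) →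
      (S.topologicalClosure : Set D) = (B : Set D) := by
    rintro ⟨N, _hN, hNb⟩
    refine Set.Subset.antisymm hsub ?_
    intro b hb
    haveI : (atTop : Filter N.ι).NeBot := atTop_neBot_iff.mpr ⟨N.ne, N.dir⟩
    have key : Tendsto (fun i => (π (N.elem i) : D) * b) atTop (𝓝 b) := by
      rw [tendsto_iff_norm_sub_tendsto_zero]
      exact hNb ⟨b, hb⟩
    have hclosed : IsClosed (S.topologicalClosure : Set D) :=
      S.isClosed_topologicalClosure
    refine hclosed.mem_of_tendsto key (Eventually.of_forall fun i => ?_)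
    exact S.le_topologicalClosure (Submodule.subset_span ⟨N.elem i, ⟨b, hb⟩, rfl⟩)
  -- (iii) → (ii)
  have h32 : (S.topologicalClosure : Set D) = (B : Set D) →
      (∀ N : DirectedNet.{u} ↥A, N.IsLCAI A →
        ∀ b : B, Tendsto (fun i => ‖(π (N.elem i) : D) * (b : D) - (b : D)‖) atTop (𝓝 0)) := by
    intro hP3 N hN b
    -- first, convergence on elements of the span S
    have hcontr1 : ∀ i, ‖(π (N.elem i) : D)‖ ≤ 1 :=
      fun i => (hcontr _).trans (hN.1 i)
    have key : ∀ s ∈ S, Tendsto (fun i => ‖(π (N.elem i) : D) * s - s‖) atTop (𝓝 0) := by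
      intro s hs
      induction hs using Submodule.span_induction with
      | mem x hx =>
        obtain ⟨a, b', rfl⟩ := hx
        have hbound : ∀ i, ‖(π (N.elem i) : D) * ((π a : D) * (b' : D)) - (π a : D) * (b' : D)‖
            ≤ ‖(N.elem i : C) * (a : C) - (a : C)‖ * ‖(b' : D)‖ := by
          intro i
          have h1 : (π (N.elem i * a) : D) = (π (N.elem i) : D) * (π a : D) :=
            hmul (N.elem i) a (N.elem i * a) rfl
          calc ‖(π (N.elem i) : D) * ((π a : D) * (b' : D)) - (π a : D) * (b' : D)‖
              = ‖((π (N.elem i) : D) * (π a : D) - (π a : D)) * (b' : D)‖ := by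
                rw [sub_mul, mul_assoc]
            _ ≤ ‖(π (N.elem i) : D) * (π a : D) - (π a : D)‖ * ‖(b' : D)‖ :=
                norm_mul_le _ _
            _ = ‖(π (N.elem i * a - a) : D)‖ * ‖(b' : D)‖ := by
                rw [map_sub]; push_cast; rw [h1]
            _ ≤ ‖((N.elem i * a - a : A) : C)‖ * ‖(b' : D)‖ :=
                mul_le_mul_of_nonneg_right (hcontr _) (norm_nonneg _)
            _ = ‖(N.elem i : C) * (a : C) - (a : C)‖ * ‖(b' : D)‖ := by push_cast; ring_nf
        have hlim : Tendsto (fun i => ‖(N.elem i : C) * (a : C) - (a : C)‖ * ‖(b' : D)‖)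
            atTop (𝓝 0) := by
          simpa using (hN.2 a).mul_const ‖(b' : D)‖
        exact squeeze_zero (fun i => norm_nonneg _) hbound hlim
      | zero => simpa using tendsto_const_nhds
      | add x y hx hy ihx ihy =>
        have hb : ∀ i, ‖(π (N.elem i) : D) * (x + y) - (x + y)‖
            ≤ ‖(π (N.elem i) : D) * x - x‖ + ‖(π (N.elem i) : D) * y - y‖ := by
          intro i
          calc ‖(π (N.elem i) : D) * (x + y) - (x + y)‖
              = ‖((π (N.elem i) : D) * x - x) + ((π (N.elem i) : D) * y - y)‖ := by
                rw [mul_add]; abel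
            _ ≤ _ := norm_add_le _ _
        have := ihx.add ihy
        rw [add_zero] at this
        exact squeeze_zero (fun i => norm_nonneg _) hb this
      | smul c x hx ihx =>
        have heq : ∀ i, ‖(π (N.elem i) : D) * (c • x) - c • x‖
            = ‖c‖ * ‖(π (N.elem i) : D) * x - x‖ := by
          intro i
          rw [mul_smul_comm, ← smul_sub, norm_smul]
        simp only [heq]
        simpa using ihx.const_mul ‖c‖
    -- now extend to the closure
    have hbmem : (b : D) ∈ closure (S : Set D) := by
      rw [← Submodule.topologicalClosure_coe, hP3]; exact b.2
    rw [NormedAddCommGroup.tendsto_nhds_zero]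
    intro ε hε
    obtain ⟨s, hsS, hdist⟩ := Metric.mem_closure_iff.mp hbmem (ε / 3) (by linarith)
    rw [dist_eq_norm] at hdist
    have hev := (NormedAddCommGroup.tendsto_nhds_zero.mp (key s hsS)) (ε / 3) (by linarith)
    filter_upwards [hev] with i hi
    have hi' : ‖(π (N.elem i) : D) * s - s‖ < ε / 3 := by
      simpa [Real.norm_eq_abs, abs_of_nonneg (norm_nonneg _)] using hi
    have hmain : ‖(π (N.elem i) : D) * (b : D) - (b : D)‖ < ε := by
      have hsplit : (π (N.elem i) : D) * (b : D) - (b : D)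
          = (π (N.elem i) : D) * ((b : D) - s) + ((π (N.elem i) : D) * s - s)
            + (s - (b : D)) := by rw [mul_sub]; abel
      calc ‖(π (N.elem i) : D) * (b : D) - (b : D)‖
          ≤ ‖(π (N.elem i) : D) * ((b : D) - s)‖ + ‖(π (N.elem i) : D) * s - s‖
            + ‖s - (b : D)‖ := by
            rw [hsplit]; exact norm_add₃_le
        _ ≤ ‖(b : D) - s‖ + ‖(π (N.elem i) : D) * s - s‖ + ‖s - (b : D)‖ := by
            gcongr
            calc ‖(π (N.elem i) : D) * ((b : D) - s)‖
                ≤ ‖(π (N.elem i) : D)‖ * ‖(b : D) - s‖ := norm_mul_le _ _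
              _ ≤ 1 * ‖(b : D) - s‖ :=
                  mul_le_mul_of_nonneg_right (hcontr1 i) (norm_nonneg _)
              _ = ‖(b : D) - s‖ := one_mul _
        _ < ε / 3 + ε / 3 + ε / 3 := by
            rw [norm_sub_rev s]
            exact add_lt_add (add_lt_add hdist hi') hdist
        _ = ε := by ring
    simpa [Real.norm_eq_abs, abs_of_nonneg (norm_nonneg _)] using hmain
  -- assemble
  obtain ⟨N₀, hN₀⟩ := hAlcai
  constructor
  · exact ⟨h13, fun h3 => ⟨N₀, hN₀, h32 h3 N₀ hN₀⟩⟩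
  · exact ⟨fun h2 => h13 ⟨N₀, hN₀, h2 N₀ hN₀⟩, h32⟩
end
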